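/- arXiv:math/0311125 — 8 statements merged into one kernel-verified Lean document; each statement's English description precedes it below -/
import Mathlib

section
/- For all real β > 1 and all real ℓ ≥ 1, (ℓ - 1)/(β - 1) ≤ (ℓ/β)^α, where α = β/(β-1). Moreover, equality holds if and only if ℓ = β. -/
/-- Base case of the pruning inequality: for real `β > 1` and `ℓ ≥ 1`,
`(ℓ - 1)/(β - 1) ≤ (ℓ/β) ^ (β/(β-1))`, with equality iff `ℓ = β`. -/
theorem pruning_base_case (β ℓ : ℝ) (hβ : 1 < β) (hℓ : 1 ≤ ℓ) :
    (ℓ - 1) / (β - 1) ≤ (ℓ / β) ^ (β / (β - 1)) ∧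
    ((ℓ - 1) / (β - 1) = (ℓ / β) ^ (β / (β - 1)) ↔ ℓ = β) := by
  have hβ0 : (0:ℝ) < β := lt_trans one_pos hβ
  have hβ1 : (0:ℝ) < β - 1 := by linarith
  set s : ℝ := ℓ / β - 1 with hs_def
  have hs : -1 ≤ s := by
    have : 0 < ℓ / β := div_pos (by linarith) hβ0
    simp [hs_def]; linarith
  have hp : 1 < β / (β - 1) := by
    rw [lt_div_iff₀ hβ1]; linarith
  have key : 1 + (β / (β - 1)) * s = (ℓ - 1) / (β - 1) := by
    field_simp [hs_def]
    have h2 : β * (ℓ / β) = ℓ := by field_simp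
    rw [hs_def]; linear_combination h2
  have heq : (1 + s : ℝ) = ℓ / β := by simp [hs_def]
  constructor
  · have := one_add_mul_self_le_rpow_one_add hs hp.le
    rwa [key, heq] at this
  · constructor
    · intro h
      by_contra hne
      have hs' : s ≠ 0 := by
        simp [hs_def, sub_eq_zero]
        intro hc
        exact hne (by field_simp at hc; linarith)
      have := one_add_mul_self_lt_rpow_one_add hs hs' hp
      rw [key, heq] at this
      linarith [this, h.ge]
    · intro h
      subst h
      rw [div_self hβ0.ne', Real.one_rpow]
      field_simp
end

section
/- Let β > 1 be real, α = β/(β-1), and let m₁ ≤ m₂ ≤ ⋯ ≤ m_ℓ be nonnegative reals with ℓ ≥ 1. Then (m₁^α + ⋯ + m_{ℓ-1}^α)/(β-1) ≤ ((m₁ + ⋯ + m_ℓ)/β)^α. -/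
/-- Inductive step of the pruning inequality: for `β > 1`, `α = β/(β-1)`, and
nonnegative reals `m 0 ≤ m 1 ≤ ⋯ ≤ m (ℓ-1)`, the sum of the `α`-th powers of all
but the largest term, divided by `β - 1`, is at most `((m 0 + ⋯ + m (ℓ-1))/β) ^ α`. -/
theorem pruning_inductive_step (β : ℝ) (hβ : 1 < β) (ℓ : ℕ) (hℓ : 1 ≤ ℓ)
    (m : Fin ℓ → ℝ) (hm : ∀ i, 0 ≤ m i) (hmono : Monotone m) :
    (∑ i ∈ Finset.univ.filter (fun i : Fin ℓ => (i : ℕ) < ℓ - 1), m i ^ (β / (β - 1)))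
        / (β - 1)
      ≤ ((∑ i, m i) / β) ^ (β / (β - 1)) := by
  have hβ0 : (0:ℝ) < β := by linarith
  have hb1 : (0:ℝ) < β - 1 := by linarith
  have hb0 : β ≠ 0 := ne_of_gt hβ0
  have hb1' : β - 1 ≠ 0 := ne_of_gt hb1
  set t : ℝ := 1 / (β - 1) with ht
  have ht0 : 0 < t := by positivity
  have hα : β / (β - 1) = t + 1 := by rw [ht]; field_simp; ring
  set L : Fin ℓ := ⟨ℓ - 1, by omega⟩ with hL
  set M := m L with hMdef
  have hM0 : 0 ≤ M := hm L
  have hle : ∀ i : Fin ℓ, m i ≤ M := by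
    intro i
    apply hmono
    rw [Fin.le_def]
    have := i.isLt
    simp only [hL]
    omega
  set F := Finset.univ.filter (fun i : Fin ℓ => (i : ℕ) < ℓ - 1) with hF
  have hcompl : Finset.univ.filter (fun i : Fin ℓ => ¬ (i : ℕ) < ℓ - 1) = {L} := by
    ext i
    simp only [Finset.mem_filter, Finset.mem_univ, true_and, Finset.mem_singleton]
    constructor
    · intro h
      have := i.isLt
      exact Fin.ext (by simp only [hL]; omega)
    · intro h; subst h; simp only [hL]; omega
  set S := ∑ i, m i with hS
  have hsum : (∑ i ∈ F, m i) + M = S := by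
    rw [hS, hF, hMdef, ← Finset.sum_filter_add_sum_filter_not Finset.univ
      (fun i : Fin ℓ => (i : ℕ) < ℓ - 1) m, hcompl, Finset.sum_singleton]
  have hFsum0 : 0 ≤ ∑ i ∈ F, m i := Finset.sum_nonneg fun i _ => hm i
  have hS0 : 0 ≤ S := by linarith
  have hSM0 : 0 ≤ S - M := by linarith
  -- Step 1 : bound the sum of α-powers
  have step1 : ∑ i ∈ F, m i ^ (β/(β-1)) ≤ M ^ t * (S - M) := by
    have hrw : S - M = ∑ i ∈ F, m i := by linarith
    rw [hrw, Finset.mul_sum]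
    apply Finset.sum_le_sum
    intro i _
    have h1 : m i ^ (β/(β-1)) = m i ^ t * m i := by
      rw [hα, Real.rpow_add' (hm i) (by positivity), Real.rpow_one]
    rw [h1]
    exact mul_le_mul_of_nonneg_right (Real.rpow_le_rpow (hm i) (hle i) ht0.le) (hm i)
  -- Step 2 : AM-GM
  have hSM0' : 0 ≤ (S - M) / (β - 1) := by positivity
  have amgm : M ^ (1/β) * ((S - M)/(β-1)) ^ ((β-1)/β) ≤ S / β := by
    have h := Real.geom_mean_le_arith_mean2_weighted
      (by positivity : (0:ℝ) ≤ 1/β) (by positivity : (0:ℝ) ≤ (β-1)/β)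
      hM0 hSM0' (by field_simp; ring)
    calc M ^ (1/β) * ((S - M)/(β-1)) ^ ((β-1)/β)
        ≤ 1/β * M + (β-1)/β * ((S-M)/(β-1)) := h
      _ = S / β := by field_simp; ring
  have step2 : M ^ t * (S - M) ≤ (β - 1) * ((S/β) ^ (β/(β-1))) := by
    have h := Real.rpow_le_rpow (by positivity) amgm
      (le_of_lt (by positivity : (0:ℝ) < β/(β-1)))
    rw [Real.mul_rpow (by positivity) (by positivity),
      ← Real.rpow_mul hM0, ← Real.rpow_mul hSM0'] at h
    have e1 : (1/β)*(β/(β-1)) = t := by rw [ht]; field_simp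
    have e2 : ((β-1)/β)*(β/(β-1)) = 1 := by field_simp
    rw [e1, e2, Real.rpow_one] at h
    -- h : M ^ t * ((S - M) / (β - 1)) ≤ (S / β) ^ (β / (β - 1))
    have := mul_le_mul_of_nonneg_left h hb1.le
    calc M ^ t * (S - M) = (β - 1) * (M ^ t * ((S - M) / (β - 1))) := by
          field_simp
      _ ≤ (β - 1) * ((S/β) ^ (β/(β-1))) := this
  -- Conclude
  rw [div_le_iff₀ hb1]
  calc ∑ i ∈ F, m i ^ (β/(β-1)) ≤ M ^ t * (S - M) := step1
    _ ≤ (β - 1) * ((S/β) ^ (β/(β-1))) := step2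
    _ = (S/β) ^ (β/(β-1)) * (β - 1) := by ring
end

section
/- Let T be a locally finite rooted tree with root x, and k ≥ 1. If x is not contained in any finite (k-1)-fort of T, then T contains a subtree rooted at x in which every vertex has at least k children (a k-ary subtree containing x). -/
variable {V : Type*}

/-- A `j`-fort in a graph: a nonempty connected set of vertices each of which has
at most `j` neighbors outside the set. -/
def SimpleGraph.IsFort (G : SimpleGraph V) (j : ℕ) (F : Set V) : Prop :=
  F.Nonempty ∧ (G.induce F).Connected ∧
    ∀ v ∈ F, {w | G.Adj v w ∧ w ∉ F}.ncard ≤ j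

/-- The children of `v` in the tree `G` rooted at `x`. -/
def SimpleGraph.children (G : SimpleGraph V) (x v : V) : Set V :=
  {w | G.Adj v w ∧ G.dist x w = G.dist x v + 1}

namespace RedLemmaAux

open SimpleGraph

/-- A walk whose support lies in `F` gives reachability in the induced graph. -/
lemma reachable_induce (G : SimpleGraph V) (F : Set V) :
    ∀ {a b : V} (p : G.Walk a b), (∀ u ∈ p.support, u ∈ F) →
      ∀ (ha : a ∈ F) (hb : b ∈ F), (G.induce F).Reachable ⟨a, ha⟩ ⟨b, hb⟩ := by
  intro a b p
  induction p with
  | nil => intro _ ha hb; exact Reachable.refl _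
  | @cons a c b h q ih =>
    intro hp ha hb
    have hc : c ∈ F := hp c (by simp [Walk.support_cons])
    have hadj : (G.induce F).Adj ⟨a, ha⟩ ⟨c, hc⟩ := h
    exact hadj.reachable.trans (ih (fun u hu => hp u (by simp [Walk.support_cons, hu])) hc hb)

/-- The deletion process: repeatedly delete vertices with fewer than `k`
surviving children. -/
def stage (G : SimpleGraph V) (x : V) (k : ℕ) : ℕ → Set V
  | 0 => Set.univ
  | n + 1 => {v | v ∈ stage G x k n ∧ k ≤ (stage G x k n ∩ G.children x v).ncard}

lemma stage_antitone (G : SimpleGraph V) (x : V) (k : ℕ) : Antitone (stage G x k) :=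
  antitone_nat_of_succ_le fun n v hv => hv.1

lemma children_finite (G : SimpleGraph V) [G.LocallyFinite] (x v : V) :
    (G.children x v).Finite :=
  (G.neighborSet v).toFinite.subset (fun w hw => hw.1)

lemma sinf_children (G : SimpleGraph V) [G.LocallyFinite] (x : V) (k : ℕ) {v : V}
    (hv : v ∈ ⋂ n, stage G x k n) :
    k ≤ ((⋂ n, stage G x k n) ∩ G.children x v).ncard := by
  set C := G.children x v with hC
  have hCfin : C.Finite := children_finite G x v
  have hmem : sInf {t | ∃ n, (stage G x k n ∩ C).ncard = t} ∈
      {t | ∃ n, (stage G x k n ∩ C).ncard = t} :=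
    Nat.sInf_mem ⟨(stage G x k 0 ∩ C).ncard, 0, rfl⟩
  obtain ⟨N, hN⟩ := hmem
  have hstab : ∀ n, N ≤ n → stage G x k n ∩ C = stage G x k N ∩ C := by
    intro n hn
    refine Set.eq_of_subset_of_ncard_le
      (Set.inter_subset_inter_left C (stage_antitone G x k hn)) ?_
      (hCfin.subset Set.inter_subset_right)
    rw [hN]
    exact Nat.sInf_le ⟨n, rfl⟩
  have hkey : (⋂ n, stage G x k n) ∩ C = stage G x k N ∩ C := by
    apply Set.Subset.antisymm
    · exact Set.inter_subset_inter_left C (Set.iInter_subset _ N)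
    · rintro w ⟨hw1, hw2⟩
      refine ⟨Set.mem_iInter.2 fun n => ?_, hw2⟩
      rcases le_total n N with h | h
      · exact stage_antitone G x k h hw1
      · exact ((hstab n h).symm.subset ⟨hw1, hw2⟩).1
  have hvN : v ∈ stage G x k (N + 1) := Set.mem_iInter.1 hv (N + 1)
  rw [hkey]
  exact hvN.2

lemma dist_add_le_of_mem_support (G : SimpleGraph V) {a b u : V} (p : G.Walk a b)
    (hu : u ∈ p.support) : G.dist a u + G.dist u b ≤ p.length := by
  classical
  have h1 := SimpleGraph.dist_le (p.takeUntil u hu)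
  have h2 := SimpleGraph.dist_le (p.dropUntil u hu)
  have h3 : (p.takeUntil u hu).length + (p.dropUntil u hu).length = p.length := by
    rw [← Walk.length_append, Walk.take_spec]
  omega

/-- Every vertex other than the root has a "parent" `p`; every neighbor other than
the parent is a child. -/
lemma parent_spec {G : SimpleGraph V} (hG : G.IsTree) (x v : V) (hvx : v ≠ x) :
    ∃ p, G.Adj v p ∧ G.dist x p + 1 = G.dist x v ∧
      ∀ u, G.Adj v u → u ≠ p → G.dist x u = G.dist x v + 1 := by
  have hc := hG.isConnected
  obtain ⟨P, hP⟩ := hc.exists_walk_length_eq_dist x v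
  have hPpath : P.IsPath := P.isPath_of_length_eq_dist hP
  have hd : 1 ≤ G.dist x v := by
    have : G.dist x v ≠ 0 := fun h => hvx ((hc.dist_eq_zero_iff).mp h).symm
    omega
  obtain ⟨p, hadj, R, hR⟩ := Walk.exists_eq_cons_of_ne hvx P.reverse
  have hRlen : R.length + 1 = G.dist x v := by
    have h0 := congrArg Walk.length hR
    rw [Walk.length_reverse, hP] at h0
    simpa using h0.symm
  have hdistp : G.dist x p + 1 = G.dist x v := by
    have h1 : G.dist x p ≤ R.length := by
      simpa [Walk.length_reverse] using SimpleGraph.dist_le R.reverse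
    have h2 : G.dist x v ≤ G.dist x p + G.dist p v := hc.dist_triangle
    have h3 : G.dist p v = 1 := dist_eq_one_iff_adj.mpr hadj.symm
    omega
  refine ⟨p, hadj, hdistp, ?_⟩
  intro u hu hup
  have hvu1 : G.dist v u = 1 := dist_eq_one_iff_adj.mpr hu
  have huv1 : G.dist u v = 1 := dist_eq_one_iff_adj.mpr hu.symm
  have hxu_le : G.dist x u ≤ G.dist x v + 1 := by
    have := hc.dist_triangle (u := x) (v := v) (w := u)
    omega
  have hxu_ge : G.dist x v ≤ G.dist x u + 1 := by
    have := hc.dist_triangle (u := x) (v := u) (w := v)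
    omega
  by_contra hne
  obtain ⟨Q, hQ⟩ := hc.exists_walk_length_eq_dist x u
  have hQpath : Q.IsPath := Q.isPath_of_length_eq_dist hQ
  have hvQ : v ∉ Q.support := by
    intro hmem
    have := dist_add_le_of_mem_support G Q hmem
    omega
  have hWpath : (Q.concat hu.symm).IsPath := by
    rw [← Walk.isPath_reverse_iff, Walk.reverse_concat]
    rw [Walk.cons_isPath_iff]
    refine ⟨hQpath.reverse, ?_⟩
    simpa [Walk.support_reverse] using hvQ
  have hPW : P = Q.concat hu.symm := by
    have := hG.IsAcyclic.path_unique ⟨P, hPpath⟩ ⟨Q.concat hu.symm, hWpath⟩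
    exact congrArg Subtype.val this
  have h1 : Walk.cons hadj R = (Q.concat hu.symm).reverse := by rw [← hR, hPW]
  rw [Walk.reverse_concat] at h1
  have h2 := congrArg Walk.support h1
  rw [Walk.support_cons, Walk.support_cons] at h2
  have h3 : R.support = Q.reverse.support := by
    exact (List.cons_eq_cons.mp h2).2
  rw [R.support_eq_cons, Q.reverse.support_eq_cons] at h3
  have : p = u := (List.cons_eq_cons.mp h3).1
  exact hup this.symm

lemma adj_x_child {G : SimpleGraph V} (x u : V) (hu : G.Adj x u) :
    u ∈ G.children x x := by
  refine ⟨hu, ?_⟩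
  have h1 : G.dist x u = 1 := dist_eq_one_iff_adj.mpr hu
  simp [h1]

lemma child_neighbors {G : SimpleGraph V} (hG : G.IsTree) (x v c : V)
    (hc : c ∈ G.children x v) :
    ∀ u, G.Adj c u → u ≠ v → u ∈ G.children x c := by
  have hcx : c ≠ x := by
    intro h
    have := hc.2
    rw [h] at this
    simp [SimpleGraph.dist_self] at this
  obtain ⟨p, hpadj, hpd, hspec⟩ := parent_spec hG x c hcx
  have hvp : v = p := by
    by_contra h
    have := hspec v hc.1.symm h
    have h2 := hc.2
    omega
  intro u hu hne
  exact ⟨hu, hspec u hu (hvp ▸ hne)⟩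


lemma subfort {G : SimpleGraph V} [G.LocallyFinite] (hG : G.IsTree) (x : V) (k : ℕ) :
    ∀ (n : ℕ) (v : V), v ∉ stage G x k n →
    ∃ F : Set V, v ∈ F ∧ F.Finite ∧
      (∀ w ∈ F, ∃ q : G.Walk v w, ∀ u ∈ q.support, u ∈ F) ∧
      (∀ w ∈ F, {u | u ∈ G.children x w ∧ u ∉ F}.ncard ≤ k - 1) ∧
      (∀ w ∈ F, w ≠ v → ∀ u, G.Adj w u → u ∉ F → u ∈ G.children x w) := by
  intro n
  induction n with
  | zero => intro v hv; exact absurd (Set.mem_univ v) hv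
  | succ n ih =>
    intro v hv
    by_cases hvn : v ∈ stage G x k n
    case neg => exact ih v hvn
    have hcount : ¬ k ≤ (stage G x k n ∩ G.children x v).ncard := fun h => hv ⟨hvn, h⟩
    set C : Set V := {c | c ∈ G.children x v ∧ c ∉ stage G x k n} with hCdef
    have hCfin : C.Finite := (children_finite G x v).subset (fun c hc => hc.1)
    have hex : ∀ c ∈ C, ∃ F : Set V, c ∈ F ∧ F.Finite ∧
        (∀ w ∈ F, ∃ q : G.Walk c w, ∀ u ∈ q.support, u ∈ F) ∧
        (∀ w ∈ F, {u | u ∈ G.children x w ∧ u ∉ F}.ncard ≤ k - 1) ∧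
        (∀ w ∈ F, w ≠ c → ∀ u, G.Adj w u → u ∉ F → u ∈ G.children x w) :=
      fun c hc => ih c hc.2
    choose! Fc h1 h2 h3 h4 h5 using hex
    refine ⟨insert v (⋃ c ∈ C, Fc c), Set.mem_insert _ _,
      (hCfin.biUnion (fun c hc => h2 c hc)).insert v, ?_, ?_, ?_⟩
    · -- walks
      intro w hw
      rcases hw with rfl | hw
      · exact ⟨Walk.nil, by simp⟩
      · rw [Set.mem_iUnion₂] at hw
        obtain ⟨c, hc, hwc⟩ := hw
        obtain ⟨q, hq⟩ := h3 c hc w hwc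
        refine ⟨Walk.cons hc.1.1 q, ?_⟩
        intro u hu
        rw [Walk.support_cons] at hu
        rcases List.mem_cons.mp hu with rfl | hu
        · exact Set.mem_insert _ _
        · exact Set.mem_insert_iff.2 (Or.inr (Set.mem_biUnion hc (hq u hu)))
    · -- child counts
      intro w hw
      rcases hw with rfl | hw
      · have hsub : {u | u ∈ G.children x w ∧ u ∉ insert w (⋃ c ∈ C, Fc c)} ⊆
            stage G x k n ∩ G.children x w := by
          rintro u ⟨hu1, hu2⟩
          refine ⟨?_, hu1⟩
          by_contra hun
          exact hu2 (Set.mem_insert_iff.2 (Or.inr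
            (Set.mem_biUnion (⟨hu1, hun⟩ : u ∈ C) (h1 u ⟨hu1, hun⟩))))
        have hle := Set.ncard_le_ncard hsub
          ((children_finite G x w).subset Set.inter_subset_right)
        omega
      · rw [Set.mem_iUnion₂] at hw
        obtain ⟨c, hc, hwc⟩ := hw
        have hsub : {u | u ∈ G.children x w ∧ u ∉ insert v (⋃ c ∈ C, Fc c)} ⊆
            {u | u ∈ G.children x w ∧ u ∉ Fc c} := by
          rintro u ⟨hu1, hu2⟩
          exact ⟨hu1, fun h => hu2 (Set.mem_insert_iff.2 (Or.inr (Set.mem_biUnion hc h)))⟩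
        have hle := Set.ncard_le_ncard hsub
          ((children_finite G x w).subset (fun u hu => hu.1))
        exact le_trans hle (h4 c hc w hwc)
    · -- non-members are children
      intro w hw hwv u hu hunF
      rcases hw with rfl | hw
      · exact absurd rfl hwv
      rw [Set.mem_iUnion₂] at hw
      obtain ⟨c, hc, hwc⟩ := hw
      by_cases hwceq : w = c
      · subst hwceq
        have hunv : u ≠ v := fun h => hunF (h ▸ Set.mem_insert _ _)
        exact child_neighbors hG x v w hc.1 u hu hunv
      · exact h5 c hc w hwc hwceq u hu
          (fun h => hunF (Set.mem_insert_iff.2 (Or.inr (Set.mem_biUnion hc h))))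

lemma x_mem_sinf {G : SimpleGraph V} [G.LocallyFinite] (hG : G.IsTree)
    (x : V) (k : ℕ) (hk : 1 ≤ k)
    (hnofort : ∀ F : Set V, G.IsFort (k - 1) F → x ∈ F → F.Infinite) :
    x ∈ ⋂ n, stage G x k n := by
  by_contra h
  obtain ⟨n, hn⟩ : ∃ n, x ∉ stage G x k n := by
    simpa [Set.mem_iInter] using h
  obtain ⟨F, hxF, hfin, hwalk, hcount, hneigh⟩ := subfort hG x k n x hn
  have hfort : G.IsFort (k - 1) F := by
    refine ⟨⟨x, hxF⟩, ?_, ?_⟩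
    · rw [SimpleGraph.connected_iff]
      refine ⟨?_, ⟨⟨x, hxF⟩⟩⟩
      rintro ⟨a, ha⟩ ⟨b, hb⟩
      obtain ⟨qa, hqa⟩ := hwalk a ha
      obtain ⟨qb, hqb⟩ := hwalk b hb
      exact (reachable_induce G F qa hqa hxF ha).symm.trans
        (reachable_induce G F qb hqb hxF hb)
    · intro w hw
      have hsub : {u | G.Adj w u ∧ u ∉ F} ⊆ {u | u ∈ G.children x w ∧ u ∉ F} := by
        rintro u ⟨hu, hunF⟩
        by_cases hwx : w = x
        · refine ⟨?_, hunF⟩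
          rw [hwx] at hu ⊢
          exact adj_x_child x u hu
        · exact ⟨hneigh w hw hwx u hu hunF, hunF⟩
      exact le_trans (Set.ncard_le_ncard hsub
        ((children_finite G x w).subset (fun u h => h.1))) (hcount w hw)
  exact hnofort F hfort hxF hfin

end RedLemmaAux

/-- Auxiliary reachability predicate used to build the `k`-ary subtree. -/
inductive ReachIn (G : SimpleGraph V) (x : V) (A : Set V) : V → Prop
  | base : x ∈ A → ReachIn G x A x
  | step {v w : V} : ReachIn G x A v → w ∈ A → w ∈ G.children x v → ReachIn G x A w

/-- Red Lemma: if the root `x` of a locally finite tree is contained in no finite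
`(k-1)`-fort, then `x` is contained in a subtree in which every vertex has at
least `k` children. -/
theorem red_lemma (G : SimpleGraph V) [G.LocallyFinite] (hG : G.IsTree)
    (x : V) (k : ℕ) (hk : 1 ≤ k)
    (hnofort : ∀ F : Set V, G.IsFort (k - 1) F → x ∈ F → F.Infinite) :
    ∃ S : Set V, x ∈ S ∧ (G.induce S).Connected ∧
      ∀ v ∈ S, k ≤ (S ∩ G.children x v).ncard := by
  classical
  open RedLemmaAux in
  have hxA : x ∈ ⋂ n, stage G x k n := x_mem_sinf hG x k hk hnofort
  set A : Set V := ⋂ n, stage G x k n with hA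
  set S : Set V := {v | ReachIn G x A v} with hS
  have hSA : S ⊆ A := by
    intro v hv
    induction hv with
    | base h => exact h
    | step _ h _ _ => exact h
  have hxS : x ∈ S := ReachIn.base hxA
  have hwalk : ∀ v ∈ S, ∃ q : G.Walk x v, ∀ u ∈ q.support, u ∈ S := by
    intro v hv
    induction hv with
    | base h => exact ⟨SimpleGraph.Walk.nil, by simpa using (show x ∈ S from ReachIn.base h)⟩
    | @step a b hra hbA hbc ih =>
      obtain ⟨q, hq⟩ := ih
      refine ⟨q.concat hbc.1, ?_⟩
      intro u hu
      rw [SimpleGraph.Walk.support_concat] at hu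
      rcases List.mem_append.mp hu with hu | hu
      · exact hq u hu
      · have : u = b := by simpa using hu
        subst this
        exact ReachIn.step hra hbA hbc
  refine ⟨S, hxS, ?_, ?_⟩
  · rw [SimpleGraph.connected_iff]
    refine ⟨?_, ⟨⟨x, hxS⟩⟩⟩
    rintro ⟨a, ha⟩ ⟨b, hb⟩
    obtain ⟨qa, hqa⟩ := hwalk a ha
    obtain ⟨qb, hqb⟩ := hwalk b hb
    exact (RedLemmaAux.reachable_induce G S qa hqa hxS ha).symm.trans
      (RedLemmaAux.reachable_induce G S qb hqb hxS hb)
  · intro v hv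
    have hsub : A ∩ G.children x v ⊆ S ∩ G.children x v :=
      fun w hw => ⟨ReachIn.step hv hw.1 hw.2, hw.2⟩
    have h1 : k ≤ (A ∩ G.children x v).ncard := sinf_children G x k (hSA hv)
    exact le_trans h1 (Set.ncard_le_ncard hsub
      ((children_finite G x v).subset Set.inter_subset_right))
end

section
/- For k = 2 and d ≥ 3, the supremum of p ∈ [0,1] for which the equation Σ_{j=0}^{d-2} C(d,j) ((1-x)(1-p))^j (1-(1-x)(1-p))^{d-j} = x has a root x ∈ (0,1) equals 1 - (d-1)^{2d-3} / (d^{d-1} (d-2)^{d-2}). -/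
/-- Polynomial identity: `m t^(m+1) - (m+1) t^m + 1 = (t-1)^2 ∑_{k<m} (k+1) t^k`. -/
lemma key_id (m : ℕ) (t : ℝ) :
    (m : ℝ) * t ^ (m + 1) - ((m : ℝ) + 1) * t ^ m + 1
      = (t - 1) ^ 2 * ∑ k ∈ Finset.range m, ((k : ℝ) + 1) * t ^ k := by
  induction m with
  | zero => simp
  | succ m ih =>
    rw [Finset.sum_range_succ, mul_add, ← ih]
    push_cast
    ring

lemma key_le (m : ℕ) (t : ℝ) (ht : 0 ≤ t) :
    t ^ m * ((m : ℝ) + 1 - (m : ℝ) * t) ≤ 1 := by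
  have h := key_id m t
  have hs : 0 ≤ ∑ k ∈ Finset.range m, ((k : ℝ) + 1) * t ^ k := by
    apply Finset.sum_nonneg
    intro k _
    positivity
  have hp : t ^ (m + 1) = t ^ m * t := pow_succ t m
  nlinarith [mul_nonneg (sq_nonneg (t - 1)) hs]

lemma sum_id (e : ℕ) (q : ℝ) :
    ∑ j ∈ Finset.range (e + 2), ((e + 3).choose j : ℝ) * q ^ j * (1 - q) ^ (e + 3 - j)
      = 1 - ((e : ℝ) + 3) * q ^ (e + 2) * (1 - q) - q ^ (e + 3) := by
  have h := add_pow q (1 - q) (e + 3)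
  simp only [add_sub_cancel, one_pow] at h
  rw [show e + 3 + 1 = (e + 2) + 1 + 1 by ring] at h
  rw [Finset.sum_range_succ, Finset.sum_range_succ] at h
  have h1 : (e + 3).choose (e + 2) = e + 3 := by
    rw [show e + 3 = (e + 2) + 1 by ring, Nat.choose_succ_self_right]
  have h2 : (e + 3).choose (e + 3) = 1 := Nat.choose_self _
  rw [h1, h2] at h
  have h3 : ∀ j ∈ Finset.range (e + 2),
      q ^ j * (1 - q) ^ (e + 3 - j) * ((e + 3).choose j : ℝ)
        = ((e + 3).choose j : ℝ) * q ^ j * (1 - q) ^ (e + 3 - j) := by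
    intro j _; ring
  rw [Finset.sum_congr rfl h3] at h
  have h4 : e + 3 - (e + 2) = 1 := by omega
  have h5 : e + 3 - (e + 3) = 0 := by omega
  rw [h4, h5] at h
  push_cast at h
  nlinarith [h]

lemma hbound (e : ℕ) (q : ℝ) (hq : 0 ≤ q) :
    q ^ (e + 1) * (((e : ℝ) + 3) - ((e : ℝ) + 2) * q)
      ≤ ((e : ℝ) + 3) ^ (e + 2) * ((e : ℝ) + 1) ^ (e + 1) / ((e : ℝ) + 2) ^ (2 * e + 3) := by
  have hA0 : (0:ℝ) < (e : ℝ) + 1 := by positivity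
  have hB0 : (0:ℝ) < (e : ℝ) + 2 := by positivity
  have hC0 : (0:ℝ) < (e : ℝ) + 3 := by positivity
  set t : ℝ := q * ((e : ℝ) + 2) ^ 2 / ((((e : ℝ) + 3)) * ((e : ℝ) + 1)) with htdef
  have ht : 0 ≤ t := by positivity
  have r : ((e : ℝ) + 2) ^ 2 * q = ((e : ℝ) + 3) * ((e : ℝ) + 1) * t := by
    rw [htdef]; field_simp
  have hp : (((e : ℝ) + 2) ^ 2 * q) ^ (e + 1) = ((((e : ℝ) + 3)) * ((e : ℝ) + 1) * t) ^ (e + 1) := by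
    rw [r]
  rw [mul_pow, mul_pow, mul_pow, ← pow_mul] at hp
  have hbr : ((e : ℝ) + 2) * (((e : ℝ) + 3) - ((e : ℝ) + 2) * q)
      = ((e : ℝ) + 3) * (((e : ℝ) + 1) + 1 - ((e : ℝ) + 1) * t) := by
    linear_combination -r
  have hk := key_le (e + 1) t ht
  push_cast at hk
  have hident : q ^ (e + 1) * (((e : ℝ) + 3) - ((e : ℝ) + 2) * q)
      = ((e : ℝ) + 3) ^ (e + 2) * ((e : ℝ) + 1) ^ (e + 1) / ((e : ℝ) + 2) ^ (2 * e + 3)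
        * (t ^ (e + 1) * (((e : ℝ) + 1) + 1 - ((e : ℝ) + 1) * t)) := by
    rw [div_mul_eq_mul_div, eq_div_iff (by positivity : ((e : ℝ) + 2) ^ (2 * e + 3) ≠ 0)]
    calc q ^ (e + 1) * (((e : ℝ) + 3) - ((e : ℝ) + 2) * q) * ((e : ℝ) + 2) ^ (2 * e + 3)
        = (((e : ℝ) + 2) ^ (2 * (e + 1)) * q ^ (e + 1))
            * (((e : ℝ) + 2) * (((e : ℝ) + 3) - ((e : ℝ) + 2) * q)) := by ring
      _ = (((e : ℝ) + 3) ^ (e + 1) * ((e : ℝ) + 1) ^ (e + 1) * t ^ (e + 1))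
            * (((e : ℝ) + 3) * (((e : ℝ) + 1) + 1 - ((e : ℝ) + 1) * t)) := by rw [hp, hbr]
      _ = ((e : ℝ) + 3) ^ (e + 2) * ((e : ℝ) + 1) ^ (e + 1)
            * (t ^ (e + 1) * (((e : ℝ) + 1) + 1 - ((e : ℝ) + 1) * t)) := by ring
  rw [hident]
  have hH : (0:ℝ) < ((e : ℝ) + 3) ^ (e + 2) * ((e : ℝ) + 1) ^ (e + 1) / ((e : ℝ) + 2) ^ (2 * e + 3) := by
    positivity
  nlinarith [hH, hk]

/-- For `k = 2` and `d ≥ 3`, the supremum of `p ∈ [0,1]` for which the equation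
`P(Binom(d,(1-x)(1-p)) ≤ d-2) = x` has a root `x ∈ (0,1)` equals
`1 - (d-1)^(2d-3) / (d^(d-1) (d-2)^(d-2))`, the critical probability `p(T_d,2)`. -/
theorem critical_probability_2_rule (d : ℕ) (hd : 3 ≤ d) :
    sSup {p : ℝ | p ∈ Set.Icc (0:ℝ) 1 ∧
        ∃ x ∈ Set.Ioo (0:ℝ) 1,
          (∑ j ∈ Finset.range (d - 2 + 1),
            (d.choose j : ℝ) * ((1-x)*(1-p))^j * (1 - (1-x)*(1-p))^(d - j)) = x}
      = 1 - ((d:ℝ)-1)^(2*d-3) / ((d:ℝ)^(d-1) * ((d:ℝ)-2)^(d-2)) := by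
  obtain ⟨e, rfl⟩ : ∃ e, d = e + 3 := ⟨d - 3, by omega⟩
  clear hd
  -- massage the goal: clean up natural subtractions and casts
  simp only [show e + 3 - 2 + 1 = e + 2 by omega]
  simp only [show 2 * (e + 3) - 3 = 2 * e + 3 by omega, show e + 3 - 1 = e + 2 by omega,
    show e + 3 - 2 = e + 1 by omega]
  rw [show ((e + 3 : ℕ) : ℝ) = (e : ℝ) + 3 by push_cast; ring]
  rw [show ((e : ℝ) + 3) - 1 = (e : ℝ) + 2 by ring, show ((e : ℝ) + 3) - 2 = (e : ℝ) + 1 by ring]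
  have hA0 : (0:ℝ) < (e : ℝ) + 1 := by positivity
  have hB0 : (0:ℝ) < (e : ℝ) + 2 := by positivity
  have hC0 : (0:ℝ) < (e : ℝ) + 3 := by positivity
  set H : ℝ := ((e : ℝ) + 3) ^ (e + 2) * ((e : ℝ) + 1) ^ (e + 1) / ((e : ℝ) + 2) ^ (2 * e + 3)
    with hH
  have hH0 : (0:ℝ) < H := by rw [hH]; positivity
  have hH1 : (1:ℝ) ≤ H := by
    have h := hbound e 1 zero_le_one
    rw [← hH] at h
    norm_num at h
    linarith
  rw [show ((e : ℝ) + 2) ^ (2 * e + 3) / (((e : ℝ) + 3) ^ (e + 2) * ((e : ℝ) + 1) ^ (e + 1))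
      = 1 / H by rw [hH, one_div_div]]
  set qs : ℝ := ((e : ℝ) + 3) * ((e : ℝ) + 1) / ((e : ℝ) + 2) ^ 2 with hqs
  have hqs0 : 0 < qs := by rw [hqs]; positivity
  have hqs1 : qs < 1 := by
    rw [hqs, div_lt_one (by positivity)]
    nlinarith
  have hqsH : qs ^ (e + 1) * (((e : ℝ) + 3) - ((e : ℝ) + 2) * qs) = H := by
    rw [hqs, hH, div_pow, mul_pow, ← pow_mul]
    field_simp
    ring
  set ys : ℝ := qs * H with hys
  have hys0 : 0 < ys := by rw [hys]; positivity
  have hysg : ys = ((e : ℝ) + 3) * qs ^ (e + 2) - ((e : ℝ) + 2) * qs ^ (e + 3) := by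
    rw [hys, ← hqsH]; ring
  have hys1 : ys < 1 := by
    have hid := key_id (e + 2) qs
    push_cast at hid
    have hS : (1:ℝ) ≤ ∑ k ∈ Finset.range (e + 2), ((k : ℝ) + 1) * qs ^ k := by
      have h0 : (0:ℕ) ∈ Finset.range (e + 2) := Finset.mem_range.mpr (by omega)
      have hnn : ∀ i ∈ Finset.range (e + 2), 0 ≤ ((i : ℝ) + 1) * qs ^ i := fun i _ =>
        mul_nonneg (by positivity) (pow_nonneg hqs0.le i)
      have h1 := Finset.single_le_sum hnn h0
      simpa using h1
    have hsq : 0 < (qs - 1) ^ 2 := by nlinarith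
    nlinarith [mul_le_mul_of_nonneg_left hS (sq_nonneg (qs - 1)), hid, hysg]
  apply IsGreatest.csSup_eq
  constructor
  · -- membership
    simp only [Set.mem_setOf_eq]
    have hp1 : 1 - 1 / H ≤ 1 := by
      have := one_div_pos.mpr hH0
      linarith
    have hp0 : (0:ℝ) ≤ 1 - 1 / H := by
      rw [sub_nonneg, div_le_one hH0]
      exact hH1
    refine ⟨⟨hp0, hp1⟩, 1 - ys, ⟨by linarith, by linarith⟩, ?_⟩
    have hq : (1 - (1 - ys)) * (1 - (1 - 1 / H)) = qs := by
      rw [hys]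
      field_simp
      ring
    simp only [hq]
    rw [sum_id]
    linear_combination hysg
  · -- upper bound
    rintro p ⟨⟨hp0, hp1⟩, x, ⟨hx0, hx1⟩, heq⟩
    rw [sum_id] at heq
    set q : ℝ := (1 - x) * (1 - p) with hqdef
    have hy : 1 - x = q ^ (e + 2) * (((e : ℝ) + 3) - ((e : ℝ) + 2) * q) := by
      linear_combination heq
    have hq0 : 0 ≤ q := mul_nonneg (by linarith) (by linarith)
    have hqpos : 0 < q := by
      rcases hq0.lt_or_eq with h | h
      · exact h
      · exfalso
        rw [← h] at hy
        simp at hy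
        linarith
    have hT : 0 < ((e : ℝ) + 3) - ((e : ℝ) + 2) * q := by
      by_contra hcon
      push_neg at hcon
      nlinarith [pow_pos hqpos (e + 2)]
    have hhpos : 0 < q ^ (e + 1) * (((e : ℝ) + 3) - ((e : ℝ) + 2) * q) :=
      mul_pos (pow_pos hqpos (e + 1)) hT
    have hq' : q = (q ^ (e + 2) * (((e : ℝ) + 3) - ((e : ℝ) + 2) * q)) * (1 - p) := by
      conv_lhs => rw [hqdef]
      rw [hy]
    have h2 : q * (q ^ (e + 1) * (((e : ℝ) + 3) - ((e : ℝ) + 2) * q) * (1 - p)) = q * 1 := by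
      rw [mul_one]
      linear_combination (-1 : ℝ) * hq'
    have hrel : q ^ (e + 1) * (((e : ℝ) + 3) - ((e : ℝ) + 2) * q) * (1 - p) = 1 :=
      mul_left_cancel₀ (ne_of_gt hqpos) h2
    have hp' : 1 - p = 1 / (q ^ (e + 1) * (((e : ℝ) + 3) - ((e : ℝ) + 2) * q)) := by
      rw [eq_div_iff (ne_of_gt hhpos)]
      linear_combination hrel
    have hb := hbound e q hq0
    rw [← hH] at hb
    have : 1 / H ≤ 1 / (q ^ (e + 1) * (((e : ℝ) + 3) - ((e : ℝ) + 2) * q)) :=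
      one_div_le_one_div_of_le hhpos hb
    linarith
end

section
/- As d → ∞, 1 - (d-1)^{2d-3}/(d^{d-1}(d-2)^{d-2}) ~ 1/(2d²); that is, the limit as d → ∞ of 2d² · (1 - (d-1)^{2d-3}/(d^{d-1}(d-2)^{d-2})) equals 1. -/
open Real Filter

noncomputable def Pfun (s : ℝ) : ℝ := (Real.log (1 - s) + s + s ^ 2 / 2) / s ^ 3

lemma P_lim : Tendsto Pfun (nhdsWithin 0 {(0:ℝ)}ᶜ) (nhds (-1/3)) := by
  have hne : ∀ᶠ s : ℝ in nhdsWithin 0 {(0:ℝ)}ᶜ, s ≠ 0 := eventually_mem_nhdsWithin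
  have hball : ∀ᶠ s : ℝ in nhdsWithin 0 {(0:ℝ)}ᶜ, s ∈ Set.Ioo (-1:ℝ) 1 :=
    eventually_nhdsWithin_of_eventually_nhds (Ioo_mem_nhds (by norm_num) (by norm_num))
  have h1s : ∀ᶠ s : ℝ in nhdsWithin 0 {(0:ℝ)}ᶜ, (1:ℝ) - s ≠ 0 := by
    filter_upwards [hball] with s hs
    have := hs.2; intro h; linarith
  have hff' : ∀ᶠ s : ℝ in nhdsWithin 0 {(0:ℝ)}ᶜ,
      HasDerivAt (fun s : ℝ => Real.log (1 - s) + s + s ^ 2 / 2)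
        (-(1 - s)⁻¹ + 1 + s) s := by
    filter_upwards [h1s] with s hs
    have hlog : HasDerivAt (fun s : ℝ => Real.log (1 - s)) (-(1 - s)⁻¹) s := by
      have hsub : HasDerivAt (fun s : ℝ => 1 - s) (-1) s := by
        exact (hasDerivAt_id s).const_sub 1
      have := (Real.hasDerivAt_log hs).comp s hsub
      exact this.congr_deriv (by ring)
    have hsq : HasDerivAt (fun s : ℝ => s ^ 2 / 2) s s := by
      simpa using (hasDerivAt_pow 2 s).div_const 2
    exact (hlog.add (hasDerivAt_id s)).add hsq
  have hgg' : ∀ᶠ s : ℝ in nhdsWithin 0 {(0:ℝ)}ᶜ,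
      HasDerivAt (fun s : ℝ => s ^ 3) (3 * s ^ 2) s := by
    filter_upwards with s
    simpa using hasDerivAt_pow 3 s
  have hg' : ∀ᶠ s : ℝ in nhdsWithin 0 {(0:ℝ)}ᶜ, 3 * s ^ 2 ≠ 0 := by
    filter_upwards [hne] with s hs
    positivity
  have hfa : Tendsto (fun s : ℝ => Real.log (1 - s) + s + s ^ 2 / 2)
      (nhdsWithin 0 {(0:ℝ)}ᶜ) (nhds 0) := by
    have hc : ContinuousAt (fun s : ℝ => Real.log (1 - s) + s + s ^ 2 / 2) 0 := by
      have h1 : ContinuousAt (fun s : ℝ => Real.log (1 - s)) 0 :=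
        (Real.continuousAt_log (by norm_num)).comp (by fun_prop)
      exact (h1.add continuousAt_id).add (by fun_prop)
    have := hc.tendsto.mono_left (nhdsWithin_le_nhds (s := {(0:ℝ)}ᶜ))
    simpa using this
  have hga : Tendsto (fun s : ℝ => s ^ 3) (nhdsWithin 0 {(0:ℝ)}ᶜ) (nhds 0) := by
    have := ((continuous_pow 3).continuousAt (x := (0:ℝ))).tendsto.mono_left
      (nhdsWithin_le_nhds (s := {(0:ℝ)}ᶜ))
    simpa using this
  have hdiv : Tendsto (fun s : ℝ => (-(1 - s)⁻¹ + 1 + s) / (3 * s ^ 2))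
      (nhdsWithin 0 {(0:ℝ)}ᶜ) (nhds (-1/3)) := by
    have heq : ∀ᶠ s : ℝ in nhdsWithin 0 {(0:ℝ)}ᶜ,
        -1 / (3 * (1 - s)) = (-(1 - s)⁻¹ + 1 + s) / (3 * s ^ 2) := by
      filter_upwards [hne, h1s] with s hs h1
      field_simp
      ring
    have hcont : Tendsto (fun s : ℝ => -1 / (3 * (1 - s)))
        (nhdsWithin 0 {(0:ℝ)}ᶜ) (nhds (-1/3)) := by
      have hc : ContinuousAt (fun s : ℝ => -1 / (3 * (1 - s))) 0 :=
        continuousAt_const.div (by fun_prop) (by norm_num)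
      have := hc.tendsto.mono_left (nhdsWithin_le_nhds (s := {(0:ℝ)}ᶜ))
      simpa using this
    exact hcont.congr' heq
  have := HasDerivAt.lhopital_zero_nhdsNE hff' hgg' hg' hfa hga hdiv
  exact this


lemma key_lim : Tendsto (fun t : ℝ =>
    ((2 - 3 * t) * Real.log (1 - t) - (1 - 2 * t) * Real.log (1 - 2 * t)) / t ^ 3)
    (nhdsWithin 0 {(0:ℝ)}ᶜ) (nhds (-1/2)) := by
  have hne : ∀ᶠ t : ℝ in nhdsWithin 0 {(0:ℝ)}ᶜ, t ≠ 0 := eventually_mem_nhdsWithin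
  have h2t : Tendsto (fun t : ℝ => 2 * t) (nhdsWithin 0 {(0:ℝ)}ᶜ)
      (nhdsWithin 0 {(0:ℝ)}ᶜ) := by
    rw [tendsto_nhdsWithin_iff]
    constructor
    · have : Tendsto (fun t : ℝ => 2 * t) (nhds 0) (nhds (2 * 0)) :=
        (continuous_const.mul continuous_id).continuousAt
      simpa using this.mono_left (nhdsWithin_le_nhds (s := {(0:ℝ)}ᶜ))
    · filter_upwards [hne] with t ht
      simp [ht]
  have hP2 : Tendsto (fun t : ℝ => Pfun (2 * t)) (nhdsWithin 0 {(0:ℝ)}ᶜ)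
      (nhds (-1/3)) := P_lim.comp h2t
  have hrhs : Tendsto (fun t : ℝ => (2 - 3 * t) * Pfun t - 8 * (1 - 2 * t) * Pfun (2 * t) - 5/2)
      (nhdsWithin 0 {(0:ℝ)}ᶜ) (nhds (-1/2)) := by
    have hc1 : Tendsto (fun t : ℝ => (2:ℝ) - 3 * t) (nhdsWithin 0 {(0:ℝ)}ᶜ) (nhds 2) := by
      have : Tendsto (fun t : ℝ => (2:ℝ) - 3 * t) (nhds 0) (nhds (2 - 3 * 0)) :=
        (continuous_const.sub (continuous_const.mul continuous_id)).continuousAt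
      simpa using this.mono_left (nhdsWithin_le_nhds (s := {(0:ℝ)}ᶜ))
    have hc2 : Tendsto (fun t : ℝ => (8:ℝ) * (1 - 2 * t)) (nhdsWithin 0 {(0:ℝ)}ᶜ) (nhds 8) := by
      have : Tendsto (fun t : ℝ => (8:ℝ) * (1 - 2 * t)) (nhds 0) (nhds (8 * (1 - 2 * 0))) :=
        (continuous_const.mul (continuous_const.sub (continuous_const.mul continuous_id))).continuousAt
      simpa using this.mono_left (nhdsWithin_le_nhds (s := {(0:ℝ)}ᶜ))
    have := ((hc1.mul P_lim).sub (hc2.mul hP2)).sub (tendsto_const_nhds (x := (5/2:ℝ)))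
    convert this using 2
    norm_num
  refine hrhs.congr' ?_
  filter_upwards [hne] with t ht
  unfold Pfun
  have h2 : (2:ℝ) * t ≠ 0 := by simp [ht]
  field_simp
  ring

noncomputable def llog (x : ℝ) : ℝ :=
  (2 * x - 3) * Real.log (x - 1) - (x - 1) * Real.log x - (x - 2) * Real.log (x - 2)

lemma hA : Tendsto (fun d : ℕ => (d:ℝ) ^ 2 * llog d) atTop (nhds (-1/2)) := by
  have hinv : Tendsto (fun d : ℕ => ((d:ℝ))⁻¹) atTop (nhdsWithin 0 {(0:ℝ)}ᶜ) := by
    rw [tendsto_nhdsWithin_iff]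
    constructor
    · exact tendsto_inv_atTop_zero.comp tendsto_natCast_atTop_atTop
    · filter_upwards [eventually_ge_atTop 1] with d hd
      have : (0:ℝ) < (d:ℝ) := by exact_mod_cast Nat.lt_of_lt_of_le Nat.zero_lt_one hd
      simp [ne_of_gt (inv_pos.mpr this)]
  have := key_lim.comp hinv
  refine this.congr' ?_
  filter_upwards [eventually_ge_atTop 3] with d hd
  have hx3 : (3:ℝ) ≤ (d:ℝ) := by exact_mod_cast hd
  set x : ℝ := (d:ℝ) with hxdef
  have hx0 : x ≠ 0 := by intro h; rw [h] at hx3; linarith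
  have hx1 : x - 1 ≠ 0 := by intro h; nlinarith
  have hx2 : x - 2 ≠ 0 := by intro h; nlinarith
  have hl1 : Real.log (1 - x⁻¹) = Real.log (x - 1) - Real.log x := by
    rw [show (1:ℝ) - x⁻¹ = (x - 1) / x by field_simp, Real.log_div hx1 hx0]
  have hl2 : Real.log (1 - 2 * x⁻¹) = Real.log (x - 2) - Real.log x := by
    rw [show (1:ℝ) - 2 * x⁻¹ = (x - 2) / x by field_simp, Real.log_div hx2 hx0]
  show ((2 - 3 * x⁻¹) * Real.log (1 - x⁻¹)
      - (1 - 2 * x⁻¹) * Real.log (1 - 2 * x⁻¹)) / (x⁻¹) ^ 3 = x ^ 2 * llog x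
  rw [hl1, hl2]
  unfold llog
  field_simp
  ring

lemma hB : Tendsto (fun d : ℕ => llog d) atTop (nhds 0) := by
  have hsq : Tendsto (fun d : ℕ => (((d:ℝ)) ^ 2)⁻¹) atTop (nhds 0) := by
    apply tendsto_inv_atTop_zero.comp
    exact (tendsto_pow_atTop (by norm_num)).comp tendsto_natCast_atTop_atTop
  have := hA.mul hsq
  rw [show (-1/2 : ℝ) * 0 = 0 by ring] at this
  refine this.congr' ?_
  filter_upwards [eventually_ge_atTop 1] with d hd
  have : ((d:ℝ)) ^ 2 ≠ 0 := by
    have : (0:ℝ) < (d:ℝ) := by exact_mod_cast hd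
    positivity
  field_simp

/-- Asymptotics of the critical probability `p(T_d,2)`:
`1 - (d-1)^(2d-3)/(d^(d-1)(d-2)^(d-2)) ~ 1/(2d²)` as `d → ∞`. -/
theorem critical_probability_2_rule_asymptotics :
    Filter.Tendsto
      (fun d : ℕ =>
        2 * (d:ℝ)^2 * (1 - ((d:ℝ)-1)^(2*d-3) / ((d:ℝ)^(d-1) * ((d:ℝ)-2)^(d-2))))
      Filter.atTop (nhds 1) := by
  have hneg : ∀ᶠ d : ℕ in atTop, llog d < 0 := by
    have h1 := hA.eventually_lt_const (show (-1/2 : ℝ) < 0 by norm_num)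
    filter_upwards [h1, eventually_ge_atTop 1] with d hd h1d
    have hdpos : (0:ℝ) < (d:ℝ) ^ 2 := by
      have : (0:ℝ) < (d:ℝ) := by exact_mod_cast h1d
      positivity
    nlinarith
  have hslope : Tendsto (fun d : ℕ => (Real.exp (llog d) - 1) / llog d) atTop (nhds 1) := by
    have hexp := hasDerivAt_iff_tendsto_slope.mp (Real.hasDerivAt_exp 0)
    have hll : Tendsto (fun d : ℕ => llog d) atTop (nhdsWithin 0 {(0:ℝ)}ᶜ) := by
      rw [tendsto_nhdsWithin_iff]
      exact ⟨hB, by filter_upwards [hneg] with d hd; simp [ne_of_lt hd]⟩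
    have := hexp.comp hll
    rw [Real.exp_zero] at this
    refine this.congr ?_
    intro d
    simp [slope_def_field, Real.exp_zero]
  have hmain : Tendsto (fun d : ℕ =>
      (-2) * ((d:ℝ) ^ 2 * llog d) * ((Real.exp (llog d) - 1) / llog d)) atTop (nhds 1) := by
    have := (hA.const_mul (-2)).mul hslope
    rw [show (-2:ℝ) * (-1/2) * 1 = 1 by ring] at this
    simpa [mul_assoc] using this
  refine hmain.congr' ?_
  filter_upwards [hneg, eventually_ge_atTop 3] with d hl hd
  have hx3 : (3:ℝ) ≤ (d:ℝ) := by exact_mod_cast hd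
  set x : ℝ := (d:ℝ) with hxdef
  have hx1 : (0:ℝ) < x - 1 := by linarith
  have hx0 : (0:ℝ) < x := by linarith
  have hx2 : (0:ℝ) < x - 2 := by linarith
  have e1 : (x - 1) ^ (2 * d - 3) = Real.exp ((2 * x - 3) * Real.log (x - 1)) := by
    have h3 : (3:ℕ) ≤ 2 * d := by omega
    rw [show (2 * x - 3 : ℝ) = ((2 * d - 3 : ℕ) : ℝ) by rw [Nat.cast_sub h3]; push_cast; ring,
      ← Real.log_pow, Real.exp_log (pow_pos hx1 _)]
  have e2 : x ^ (d - 1) = Real.exp ((x - 1) * Real.log x) := by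
    have h1 : (1:ℕ) ≤ d := by omega
    rw [show (x - 1 : ℝ) = ((d - 1 : ℕ) : ℝ) by rw [Nat.cast_sub h1]; push_cast; ring,
      ← Real.log_pow, Real.exp_log (pow_pos hx0 _)]
  have e3 : (x - 2) ^ (d - 2) = Real.exp ((x - 2) * Real.log (x - 2)) := by
    have h2 : (2:ℕ) ≤ d := by omega
    have hpos : (0:ℝ) < ((d - 2 : ℕ) : ℝ) := by
      have : 1 ≤ d - 2 := by omega
      exact_mod_cast this
    rw [show (x - 2 : ℝ) = ((d - 2 : ℕ) : ℝ) by rw [Nat.cast_sub h2]; push_cast; ring,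
      ← Real.log_pow, Real.exp_log (pow_pos hpos _)]
  have eratio : (x - 1) ^ (2 * d - 3) / (x ^ (d - 1) * (x - 2) ^ (d - 2))
      = Real.exp (llog x) := by
    rw [e1, e2, e3, ← Real.exp_add, ← Real.exp_sub]
    unfold llog
    ring_nf
  rw [eq_comm]
  show 2 * x ^ 2 * (1 - (x - 1) ^ (2 * d - 3) / (x ^ (d - 1) * (x - 2) ^ (d - 2)))
      = -2 * (x ^ 2 * llog x) * ((Real.exp (llog x) - 1) / llog x)
  rw [eratio]
  have hlne : llog x ≠ 0 := ne_of_lt hl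
  field_simp
  ring
end

section
/- Let G be a graph in which every vertex has degree at most d. Then for every vertex o and every integer m ≥ 1, the number of connected vertex subsets S of G with o ∈ S and |S| = m is at most ((d-1)e)^m. -/
lemma pow_succ_le_exp_mul_pow (n : ℕ) (hn : 1 ≤ n) :
    ((n:ℝ)+1)^n ≤ Real.exp 1 * (n:ℝ)^n := by
  have hn' : (0:ℝ) < n := by exact_mod_cast hn
  have h1 : ((n:ℝ)+1) = n * (1 + 1/n) := by field_simp
  have h2 : (1 + 1/(n:ℝ)) ≤ Real.exp (1/n) := by
    have := Real.add_one_le_exp (1/(n:ℝ)); linarith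
  have h3 : (1 + 1/(n:ℝ))^n ≤ Real.exp (1/n) ^ n := by
    apply pow_le_pow_left₀ (by positivity) h2
  have h4 : Real.exp (1/(n:ℝ)) ^ n = Real.exp 1 := by
    rw [← Real.exp_nat_mul]
    congr 1
    field_simp
  calc ((n:ℝ)+1)^n = (n:ℝ)^n * (1+1/n)^n := by rw [h1, mul_pow]
    _ ≤ (n:ℝ)^n * Real.exp 1 := by
        apply mul_le_mul_of_nonneg_left (h3.trans_eq h4) (by positivity)
    _ = Real.exp 1 * (n:ℝ)^n := mul_comm _ _

lemma pow_self_le (n : ℕ) (hn : 1 ≤ n) :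
    (n:ℝ)^n ≤ Real.exp 1 ^ (n-1) * (Nat.factorial n : ℝ) := by
  induction n with
  | zero => omega
  | succ k ih =>
    rcases Nat.eq_or_lt_of_le hn with h | h
    · simp [← h]
    · have hk : 1 ≤ k := by omega
      have ihk := ih hk
      have h1 : ((k:ℝ)+1)^k ≤ Real.exp 1 * (k:ℝ)^k := pow_succ_le_exp_mul_pow k hk
      have hke : (k + 1 - 1) = k := by omega
      rw [hke]
      have hkk : k - 1 + 1 = k := by omega
      push_cast [Nat.factorial_succ]
      have e1 : ((k:ℝ)+1)^(k+1) = ((k:ℝ)+1) * ((k:ℝ)+1)^k := by ring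
      rw [e1]
      calc ((k:ℝ)+1) * ((k:ℝ)+1)^k ≤ ((k:ℝ)+1) * (Real.exp 1 * (k:ℝ)^k) := by
            apply mul_le_mul_of_nonneg_left h1 (by positivity)
        _ ≤ ((k:ℝ)+1) * (Real.exp 1 * (Real.exp 1 ^ (k-1) * (Nat.factorial k : ℝ))) := by
            apply mul_le_mul_of_nonneg_left _ (by positivity)
            apply mul_le_mul_of_nonneg_left ihk (by positivity)
        _ = Real.exp 1 ^ (k-1+1) * (((k:ℝ)+1) * (Nat.factorial k : ℝ)) := by ring
        _ = Real.exp 1 ^ k * (((k:ℝ)+1) * (Nat.factorial k : ℝ)) := by rw [hkk]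

lemma numeric_bound (b m : ℕ) (hb : 1 ≤ b) (hm : 1 ≤ m) :
    (((b*m+1).choose (m-1) : ℝ)) ≤ ((b:ℝ) * Real.exp 1)^m := by
  have he1 : (1:ℝ) ≤ Real.exp 1 := by
    have := Real.add_one_le_exp (1:ℝ); linarith
  have hb' : (1:ℝ) ≤ (b:ℝ) := by exact_mod_cast hb
  have hbe : (1:ℝ) ≤ (b:ℝ) * Real.exp 1 := one_le_mul_of_one_le_of_one_le hb' he1
  rcases Nat.eq_or_lt_of_le hm with h1 | h1
  · simp [← h1]
    linarith
  · -- m ≥ 2, k = m-1 ≥ 1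
    set k := m - 1 with hk
    have hk1 : 1 ≤ k := by omega
    have hmk : m = k + 1 := by omega
    have hkR : (1:ℝ) ≤ (k:ℝ) := by exact_mod_cast hk1
    set N := b*m+1 with hN
    have step1 : ((N.choose k : ℝ)) ≤ (N:ℝ)^k / (Nat.factorial k : ℝ) := by
      exact_mod_cast Nat.choose_le_pow_div k N
    have step2 : (k:ℝ)^k ≤ Real.exp 1 ^ (k-1) * (Nat.factorial k : ℝ) := pow_self_le k hk1
    -- N ≤ b*(k+2)
    have hNle : (N:ℝ) ≤ (b:ℝ) * ((k:ℝ)+2) := by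
      have : (N:ℝ) = (b:ℝ)*(m:ℝ)+1 := by push_cast [hN]; ring
      rw [this, hmk]; push_cast
      nlinarith
    -- (1+2/k)^k ≤ exp 2 so (k+2)^k ≤ exp 2 * k^k... do: (k+2)^k ≤ (exp 1)^2 * k^k
    have hstep3 : ((k:ℝ)+2)^k ≤ Real.exp 1 ^ 2 * (k:ℝ)^k := by
      have h2 : ((k:ℝ)+2) ≤ (k:ℝ) * Real.exp (2/k) := by
        have := Real.add_one_le_exp (2/(k:ℝ))
        have hkpos : (0:ℝ) < k := by linarith
        calc ((k:ℝ)+2) = (k:ℝ) * (1 + 2/k) := by field_simp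
          _ ≤ (k:ℝ) * Real.exp (2/k) := by
              apply mul_le_mul_of_nonneg_left (by linarith) (by positivity)
      calc ((k:ℝ)+2)^k ≤ ((k:ℝ) * Real.exp (2/k))^k := by
            apply pow_le_pow_left₀ (by positivity) h2
        _ = (k:ℝ)^k * (Real.exp (2/k))^k := mul_pow _ _ _
        _ = (k:ℝ)^k * Real.exp 2 := by
            rw [← Real.exp_nat_mul]
            congr 2
            field_simp
        _ = Real.exp 1 ^ 2 * (k:ℝ)^k := by
            rw [← Real.exp_nat_mul]
            ring_nf
      -- note exp 2 = exp 1 ^ 2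
    have hkfac : (0:ℝ) < (Nat.factorial k : ℝ) := by exact_mod_cast Nat.factorial_pos k
    have hkpow : (0:ℝ) < (k:ℝ)^k := by positivity
    -- combine: N^k / k! ≤ (b e)^k * e
    have main : (N:ℝ)^k / (Nat.factorial k : ℝ) ≤ ((b:ℝ)*Real.exp 1)^k * Real.exp 1 := by
      rw [div_le_iff₀ hkfac]
      have c1 : (N:ℝ)^k ≤ ((b:ℝ)*((k:ℝ)+2))^k := by
        apply pow_le_pow_left₀ (by positivity) hNle
      have c2 : ((b:ℝ)*((k:ℝ)+2))^k = (b:ℝ)^k * ((k:ℝ)+2)^k := mul_pow _ _ _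
      have c3 : (N:ℝ)^k ≤ (b:ℝ)^k * (Real.exp 1 ^2 * (k:ℝ)^k) := by
        calc (N:ℝ)^k ≤ (b:ℝ)^k * ((k:ℝ)+2)^k := c1.trans_eq c2
          _ ≤ (b:ℝ)^k * (Real.exp 1 ^2 * (k:ℝ)^k) := by
              apply mul_le_mul_of_nonneg_left hstep3 (by positivity)
      -- k^k ≤ e^(k-1) k!
      calc (N:ℝ)^k ≤ (b:ℝ)^k * (Real.exp 1 ^2 * (k:ℝ)^k) := c3
        _ ≤ (b:ℝ)^k * (Real.exp 1 ^2 * (Real.exp 1 ^ (k-1) * (Nat.factorial k : ℝ))) := by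
            apply mul_le_mul_of_nonneg_left _ (by positivity)
            apply mul_le_mul_of_nonneg_left step2 (by positivity)
        _ = (b:ℝ)^k * Real.exp 1 ^ (k-1+2) * (Nat.factorial k : ℝ) := by ring
        _ = (b:ℝ)^k * Real.exp 1 ^ (k+1) * (Nat.factorial k : ℝ) := by
            have hh : k-1+2 = k+1 := by omega
            rw [hh]
        _ = ((b:ℝ)*Real.exp 1)^k * Real.exp 1 * (Nat.factorial k : ℝ) := by
            rw [mul_pow]; ring
    calc ((N.choose k : ℝ)) ≤ (N:ℝ)^k / (Nat.factorial k : ℝ) := step1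
      _ ≤ ((b:ℝ)*Real.exp 1)^k * Real.exp 1 := main
      _ ≤ ((b:ℝ)*Real.exp 1)^k * ((b:ℝ)*Real.exp 1) := by
          apply mul_le_mul_of_nonneg_left _ (by positivity)
          nlinarith [Real.exp_pos 1]
      _ = ((b:ℝ)*Real.exp 1)^(k+1) := by rw [pow_succ]
      _ = ((b:ℝ)*Real.exp 1)^m := by rw [← hmk]

def List.enum {α : Type*} (l : List α) : List (ℕ × α) := l.zipIdx.map Prod.swap

theorem List.enum_map_snd {α : Type*} (l : List α) : l.enum.map Prod.snd = l := by
  unfold List.enum; rw [List.map_map]; exact List.zipIdx_map_fst 0 l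

theorem List.enum_map_fst {α : Type*} (l : List α) :
    l.enum.map Prod.fst = List.range l.length := by
  unfold List.enum; rw [List.map_map, List.range_eq_range']; exact List.zipIdx_map_snd 0 l

theorem List.mk_mem_enum_iff_getElem? {α : Type*} {i : ℕ} {x : α} {l : List α} :
    (i, x) ∈ l.enum ↔ l[i]? = some x := by
  unfold List.enum
  rw [List.mem_map, ← List.mk_mem_zipIdx_iff_getElem?]
  constructor
  · rintro ⟨⟨a, b⟩, h, he⟩
    simp only [Prod.swap_prod_mk, Prod.mk.injEq] at he
    obtain ⟨rfl, rfl⟩ := he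
    exact h
  · intro h
    exact ⟨(x, i), h, rfl⟩

open scoped List

namespace KestenAux

variable {V : Type*} [DecidableEq V]

/-- list of neighbors of `v`. -/
noncomputable def nbrList (G : SimpleGraph V) [G.LocallyFinite] (v : V) : List V :=
  (G.neighborFinset v).toList

lemma mem_nbrList {G : SimpleGraph V} [G.LocallyFinite] {v u : V} :
    u ∈ nbrList G v ↔ G.Adj v u := by
  rw [nbrList, Finset.mem_toList, SimpleGraph.mem_neighborFinset]

lemma nodup_nbrList (G : SimpleGraph V) [G.LocallyFinite] (v : V) :
    (nbrList G v).Nodup := Finset.nodup_toList _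

lemma length_nbrList (G : SimpleGraph V) [G.LocallyFinite] (v : V) :
    (nbrList G v).length = G.degree v := by
  rw [nbrList, Finset.length_toList]
  rfl

/-- global slot index: step `i`, local slot `j`. -/
def gIdx (d i j : ℕ) : ℕ := if i = 0 then j else d + (i-1)*(d-1) + j

/-- bound on local slots at step `i`. -/
def bd (d i : ℕ) : ℕ := if i = 0 then d else d - 1

lemma gIdx_inj {d i j i' j' : ℕ} (hj : j < bd d i) (hj' : j' < bd d i')
    (h : gIdx d i j = gIdx d i' j') : i = i' ∧ j = j' := by
  unfold gIdx bd at *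
  rcases Nat.eq_zero_or_pos i with hi | hi <;> rcases Nat.eq_zero_or_pos i' with hi' | hi'
  · simp [hi, hi'] at *; omega
  · simp [hi, Nat.pos_iff_ne_zero.mp hi'] at *; omega
  · simp [Nat.pos_iff_ne_zero.mp hi, hi'] at *; omega
  · simp [Nat.pos_iff_ne_zero.mp hi, Nat.pos_iff_ne_zero.mp hi'] at *
    have hb : j < d - 1 := hj
    have hb' : j' < d - 1 := hj'
    have key : i - 1 = i' - 1 := by
      by_contra hne
      rcases Nat.lt_or_ge (i-1) (i'-1) with hlt | hge
      · have : (i-1)*(d-1) + j < (i'-1)*(d-1) + j' := by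
          calc (i-1)*(d-1) + j < (i-1)*(d-1) + (d-1) := by omega
            _ = ((i-1)+1)*(d-1) := by ring
            _ ≤ (i'-1)*(d-1) := Nat.mul_le_mul_right _ (by omega)
            _ ≤ (i'-1)*(d-1) + j' := Nat.le_add_right _ _
        omega
      · have hgt : (i'-1) < (i-1) := by omega
        have : (i'-1)*(d-1) + j' < (i-1)*(d-1) + j := by
          calc (i'-1)*(d-1) + j' < (i'-1)*(d-1) + (d-1) := by omega
            _ = ((i'-1)+1)*(d-1) := by ring
            _ ≤ (i-1)*(d-1) := Nat.mul_le_mul_right _ (by omega)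
            _ ≤ (i-1)*(d-1) + j := Nat.le_add_right _ _
        omega
    constructor
    · omega
    · have : (i-1)*(d-1) = (i'-1)*(d-1) := by rw [key]
      omega

lemma gIdx_lt {d m i j : ℕ} (hd : 2 ≤ d) (hm : 1 ≤ m) (hi : i < m) (hj : j < bd d i) :
    gIdx d i j < (d-1)*m + 1 := by
  unfold gIdx bd at *
  rcases Nat.eq_zero_or_pos i with h0 | h0
  · simp [h0] at *
    have : d ≤ (d-1)*m + 1 := by
      have : (d-1)*1 ≤ (d-1)*m := Nat.mul_le_mul_left _ hm
      omega
    omega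
  · simp [Nat.pos_iff_ne_zero.mp h0] at *
    have h1 : d + (i-1)*(d-1) + j < d + (i-1)*(d-1) + (d-1) := by omega
    have h2 : d + (i-1)*(d-1) + (d-1) = (d-1) * ((i-1)+2) + 1 := by
      obtain ⟨b, rfl⟩ : ∃ b, d = b + 2 := ⟨d-2, by omega⟩
      show b + 2 + (i-1)*(b+1) + (b+1) = (b+1) * ((i-1)+2) + 1
      ring
    have h3 : (d-1) * ((i-1)+2) ≤ (d-1)*m := Nat.mul_le_mul_left _ (by omega)
    omega

/-- slot list for step `i` at state entry `vp = (vertex, parent)`. -/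
noncomputable def sl (G : SimpleGraph V) [G.LocallyFinite] (i : ℕ) (vp : V × V) : List V :=
  if i = 0 then nbrList G vp.1 else (nbrList G vp.1).erase vp.2

lemma nodup_sl (G : SimpleGraph V) [G.LocallyFinite] (i : ℕ) (vp : V × V) :
    (sl G i vp).Nodup := by
  unfold sl; split
  · exact nodup_nbrList G _
  · exact (nodup_nbrList G _).erase _

lemma mem_sl_adj {G : SimpleGraph V} [G.LocallyFinite] {i : ℕ} {vp : V × V} {u : V}
    (h : u ∈ sl G i vp) : G.Adj vp.1 u := by
  unfold sl at h
  split at h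
  · exact mem_nbrList.mp h
  · exact mem_nbrList.mp (List.mem_of_mem_erase h)

/-- a selection rule -/
abbrev Sel (V : Type*) := ℕ → V → List (V × V) → Bool

/-- one exploration step. -/
noncomputable def stepF (G : SimpleGraph V) [G.LocallyFinite] (d : ℕ) (sel : Sel V) (i : ℕ)
    (L : List (V × V)) : List (V × V) :=
  match L[i]? with
  | none => L
  | some vp => L ++ (((sl G i vp).enum.filter
      (fun ju => sel (gIdx d i ju.1) ju.2 L)).map (fun ju => (ju.2, vp.1)))

/-- the exploration run. -/
noncomputable def run (G : SimpleGraph V) [G.LocallyFinite] (d : ℕ) (o : V) (sel : Sel V) : ℕ → List (V × V)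
  | 0 => [(o, o)]
  | i+1 => stepF G d sel i (run G d o sel i)

def selE (S : Finset V) : Sel V := fun _ u L => decide (u ∈ S ∧ u ∉ L.map Prod.fst)

def selD (T : Finset ℕ) : Sel V := fun g _ _ => decide (g ∈ T)

lemma selE_eq_true_iff {S : Finset V} {g : ℕ} {u : V} {L : List (V × V)} :
    selE S g u L = true ↔ (u ∈ S ∧ u ∉ L.map Prod.fst) := by
  simp [selE]

section RunLemmas

variable (G : SimpleGraph V) [G.LocallyFinite] (d : ℕ) (o : V) (sel : Sel V)

lemma stepF_none {i : ℕ} {L : List (V × V)} (h : L[i]? = none) :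
    stepF G d sel i L = L := by
  unfold stepF; rw [h]

lemma stepF_some {i : ℕ} {L : List (V × V)} {vp : V × V} (h : L[i]? = some vp) :
    stepF G d sel i L = L ++ (((sl G i vp).enum.filter
      (fun ju => sel (gIdx d i ju.1) ju.2 L)).map (fun ju => (ju.2, vp.1))) := by
  unfold stepF; rw [h]

lemma run_prefix_succ (i : ℕ) : run G d o sel i <+: run G d o sel (i+1) := by
  show run G d o sel i <+: stepF G d sel i (run G d o sel i)
  unfold stepF
  cases h : (run G d o sel i)[i]? with
  | none => simp
  | some vp => exact List.prefix_append _ _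

lemma run_prefix {i j : ℕ} (h : i ≤ j) : run G d o sel i <+: run G d o sel j := by
  induction j with
  | zero => simp_all
  | succ k ih =>
    rcases Nat.eq_or_lt_of_le h with h1 | h1
    · rw [h1]
    · exact (ih (by omega)).trans (run_prefix_succ G d o sel k)

lemma run_zero_eq : (run G d o sel 0) = [(o,o)] := rfl

lemma run_length_pos (i : ℕ) : 0 < (run G d o sel i).length := by
  have h1 := (run_prefix G d o sel (Nat.zero_le i)).length_le
  rw [run_zero_eq] at h1
  simp at h1
  omega

lemma run_getElem_zero (i : ℕ) (h : 0 < (run G d o sel i).length) :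
    (run G d o sel i)[0] = (o, o) := by
  have hp := run_prefix G d o sel (Nat.zero_le i)
  have h0 : 0 < (run G d o sel 0).length := by rw [run_zero_eq]; simp
  rw [List.getElem_eq_iff]
  obtain ⟨t, ht⟩ := hp
  rw [run_zero_eq] at ht
  rw [← ht]
  simp

lemma run_frozen {i : ℕ} (h : (run G d o sel i).length ≤ i) :
    run G d o sel (i+1) = run G d o sel i := by
  show stepF G d sel i (run G d o sel i) = _
  unfold stepF
  rw [List.getElem?_eq_none h]

lemma run_frozen' {i j : ℕ} (h : (run G d o sel i).length ≤ i) (hij : i ≤ j) :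
    run G d o sel j = run G d o sel i := by
  induction j with
  | zero =>
    have h0 : i = 0 := by omega
    rw [h0]
  | succ k ih =>
    rcases Nat.eq_or_lt_of_le hij with h1 | h1
    · rw [← h1]
    · have hk := ih (by omega)
      rw [← hk] at h ⊢
      exact run_frozen G d o sel (le_trans h (by omega))

/-- adjacency/parent invariant, for any selection rule. -/
lemma run_inv (i : ℕ) :
    (∀ vp ∈ (run G d o sel i).drop 1, G.Adj vp.2 vp.1) ∧
    (∀ vp ∈ run G d o sel i, vp.2 ∈ (run G d o sel i).map Prod.fst) := by
  induction i with
  | zero =>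
    constructor
    · intro vp hvp; simp [run] at hvp
    · intro vp hvp; simp [run] at hvp ⊢; simp [hvp]
  | succ k ih =>
    obtain ⟨ih1, ih2⟩ := ih
    show _ ∧ _
    rw [show run G d o sel (k+1) = stepF G d sel k (run G d o sel k) from rfl]
    unfold stepF
    cases h : (run G d o sel k)[k]? with
    | none => exact ⟨ih1, ih2⟩
    | some vp =>
      have hvpmem : vp ∈ run G d o sel k := List.mem_of_getElem? h
      have hlen : 0 < (run G d o sel k).length := run_length_pos G d o sel k
      constructor
      · intro wq hwq
        rw [List.drop_append_of_le_length (by omega)] at hwq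
        rcases List.mem_append.mp hwq with h1 | h1
        · exact ih1 wq h1
        · obtain ⟨ju, hju, hjueq⟩ := List.mem_map.mp h1
          have : ju.2 ∈ sl G k vp := by
            have := List.mem_of_mem_filter hju
            have h2 : ju ∈ (sl G k vp).enum := this
            have := List.enum_map_snd (sl G k vp)
            rw [← this]
            exact List.mem_map_of_mem (f := Prod.snd) h2
          have hadj := mem_sl_adj this
          rw [← hjueq]
          exact hadj
      · intro wq hwq
        rw [List.map_append]
        rcases List.mem_append.mp hwq with h1 | h1
        · exact List.mem_append_left _ (ih2 wq h1)
        · obtain ⟨ju, hju, hjueq⟩ := List.mem_map.mp h1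
          apply List.mem_append_left
          rw [← hjueq]
          show vp.1 ∈ _
          exact List.mem_map_of_mem (f := Prod.fst) hvpmem

/-- slot-list length bound at an occupied position. -/
lemma sl_length_le {n i : ℕ} {vp : V × V} (hdeg : ∀ v : V, G.degree v ≤ d)
    (h : (run G d o sel n)[i]? = some vp) : (sl G i vp).length ≤ bd d i := by
  unfold sl bd
  rcases Nat.eq_zero_or_pos i with h0 | h0
  · simp [h0]
    rw [length_nbrList]
    exact hdeg _
  · have hne : i ≠ 0 := by omega
    simp [hne]
    have hi : i < (run G d o sel n).length := by
      by_contra hcon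
      rw [List.getElem?_eq_none (by omega)] at h
      exact nomatch h
    have hmem : vp ∈ (run G d o sel n).drop 1 := by
      have : (run G d o sel n)[i] = vp := by
        have := h
        rw [List.getElem?_eq_getElem hi] at this
        exact Option.some.inj this
      rw [← this]
      have h1 : i - 1 < ((run G d o sel n).drop 1).length := by
        rw [List.length_drop]; omega
      have h2 : ((run G d o sel n).drop 1)[i-1] = (run G d o sel n)[1 + (i-1)]'(by omega) := by
        rw [List.getElem_drop]
      have h3 : (run G d o sel n)[1 + (i-1)]'(by omega) = (run G d o sel n)[i]'hi := by
        congr 1; omega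
      rw [← h3, ← h2]
      exact List.getElem_mem h1
    have hadj := (run_inv G d o sel n).1 vp hmem
    have hpmem : vp.2 ∈ nbrList G vp.1 := mem_nbrList.mpr hadj.symm
    rw [List.length_erase_of_mem hpmem, length_nbrList]
    have := hdeg vp.1
    omega

end RunLemmas


section ESel

variable (G : SimpleGraph V) [G.LocallyFinite] (d : ℕ) (o : V) (S : Finset V)

lemma run_succ_eq (sel : Sel V) (i : ℕ) :
    run G d o sel (i+1) = stepF G d sel i (run G d o sel i) := rfl

lemma runE_inv (ho : o ∈ S) (i : ℕ) :
    ((run G d o (selE S) i).map Prod.fst).Nodup ∧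
      ∀ vp ∈ run G d o (selE S) i, vp.1 ∈ S := by
  induction i with
  | zero =>
    rw [run_zero_eq]
    constructor
    · simp
    · intro vp hvp; simp at hvp; rw [hvp]; exact ho
  | succ k ih =>
    obtain ⟨ih1, ih2⟩ := ih
    rw [run_succ_eq]
    unfold stepF
    cases h : (run G d o (selE S) k)[k]? with
    | none => exact ⟨ih1, ih2⟩
    | some vp =>
      set L := run G d o (selE S) k with hL
      set filt := ((sl G k vp).enum.filter (fun ju => selE S (gIdx d k ju.1) ju.2 L)) with hfilt
      have hmapfst : (filt.map (fun ju => (ju.2, vp.1))).map Prod.fst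
          = filt.map (fun ju => ju.2) := by
        rw [List.map_map]; rfl
      have hsub : filt.map (fun ju => ju.2) <+ sl G k vp := by
        have h1 : filt <+ (sl G k vp).enum := List.filter_sublist
        have h2 := h1.map (fun ju => ju.2)
        rw [show List.map (fun (ju : ℕ × V) => ju.2) = List.map Prod.snd from rfl,
          List.enum_map_snd] at h2
        exact h2
      have hnodupnew : (filt.map (fun ju => ju.2)).Nodup := hsub.nodup (nodup_sl G k vp)
      have hsel : ∀ u ∈ filt.map (fun ju => ju.2), u ∈ S ∧ u ∉ L.map Prod.fst := by
        intro u hu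
        obtain ⟨ju, hju, rfl⟩ := List.mem_map.mp hu
        have := (List.mem_filter.mp hju).2
        simpa [selE] using this
      constructor
      · rw [List.map_append, List.nodup_append, hmapfst]
        refine ⟨ih1, hnodupnew, ?_⟩
        intro u hu u' hu2 heq
        rw [← heq] at hu2
        exact (hsel u hu2).2 hu
      · intro wq hwq
        rcases List.mem_append.mp hwq with h1 | h1
        · exact ih2 wq h1
        · obtain ⟨ju, hju, rfl⟩ := List.mem_map.mp h1
          have : ju.2 ∈ filt.map (fun ju => ju.2) := List.mem_map_of_mem hju
          exact (hsel _ this).1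

lemma runE_length_le (ho : o ∈ S) (i : ℕ) :
    (run G d o (selE S) i).length ≤ S.card := by
  obtain ⟨h1, h2⟩ := runE_inv G d o S ho i
  have hlen : ((run G d o (selE S) i).map Prod.fst).toFinset.card
      = (run G d o (selE S) i).length := by
    rw [List.toFinset_card_of_nodup h1, List.length_map]
  rw [← hlen]
  apply Finset.card_le_card
  intro u hu
  rw [List.mem_toFinset] at hu
  obtain ⟨vp, hvp, rfl⟩ := List.mem_map.mp hu
  exact h2 vp hvp

lemma runE_processed {m : ℕ} (ho : o ∈ S) (hcard : S.card = m) {i : ℕ}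
    (hi : i < (run G d o (selE S) m).length) : i < (run G d o (selE S) i).length := by
  by_contra hcon
  push_neg at hcon
  rcases le_or_gt i m with hle | hlt
  · rw [run_frozen' G d o (selE S) hcon hle] at hi
    omega
  · have := runE_length_le G d o S ho m
    omega

lemma runE_closed {m : ℕ} (ho : o ∈ S) (hcard : S.card = m) {i : ℕ}
    (hi : i < (run G d o (selE S) m).length) {u : V}
    (hadj : G.Adj ((run G d o (selE S) m)[i]'hi).1 u) (hu : u ∈ S) :
    u ∈ (run G d o (selE S) m).map Prod.fst := by
  have him : i < m := by
    have := runE_length_le G d o S ho m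
    omega
  have hproc : i < (run G d o (selE S) i).length := runE_processed G d o S ho hcard hi
  have hpref : run G d o (selE S) i <+: run G d o (selE S) m :=
    run_prefix G d o (selE S) (show i ≤ m by omega)
  obtain ⟨vp, hsome⟩ : ∃ vp, (run G d o (selE S) i)[i]? = some vp :=
    ⟨_, List.getElem?_eq_getElem hproc⟩
  have hvp : (run G d o (selE S) i)[i]'hproc = vp := by
    rw [List.getElem?_eq_getElem hproc] at hsome
    exact Option.some.inj hsome
  have hget : (run G d o (selE S) m)[i]'hi = vp := by
    rw [← hpref.getElem hproc, hvp]
  have hadj' : G.Adj vp.1 u := by rw [← hget]; exact hadj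
  by_cases hmem : u ∈ (run G d o (selE S) i).map Prod.fst
  · exact (hpref.map Prod.fst).sublist.mem hmem
  · have husl : u ∈ sl G i vp := by
      unfold sl
      rcases Nat.eq_zero_or_pos i with h0 | h0
      · simp [h0]
        exact mem_nbrList.mpr hadj'
      · have hne : i ≠ 0 := by omega
        simp [hne]
        have hp2 : vp.2 ∈ (run G d o (selE S) i).map Prod.fst :=
          (run_inv G d o (selE S) i).2 vp (List.mem_of_getElem? hsome)
        have hune : u ≠ vp.2 := by
          intro hcontra; rw [hcontra] at hmem; exact hmem hp2
        rw [List.mem_erase_of_ne hune]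
        exact mem_nbrList.mpr hadj'
    obtain ⟨j, hj, hju⟩ := List.mem_iff_getElem.mp husl
    have henum : (j, u) ∈ (sl G i vp).enum := by
      rw [List.mk_mem_enum_iff_getElem?]
      rw [List.getElem?_eq_getElem hj, hju]
    have hfilt : (j, u) ∈ (sl G i vp).enum.filter
        (fun ju => selE S (gIdx d i ju.1) ju.2 (run G d o (selE S) i)) := by
      rw [List.mem_filter]
      refine ⟨henum, ?_⟩
      simp [selE, hu, hmem]
    have hstep : u ∈ (run G d o (selE S) (i+1)).map Prod.fst := by
      rw [run_succ_eq, stepF_some G d (selE S) hsome]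
      rw [List.map_append]
      apply List.mem_append_right
      rw [List.map_map]
      exact List.mem_map.mpr ⟨(j, u), hfilt, rfl⟩
    have hpref2 : run G d o (selE S) (i+1) <+: run G d o (selE S) m :=
      run_prefix G d o (selE S) (show i+1 ≤ m by omega)
    exact (hpref2.map Prod.fst).sublist.mem hstep

lemma runE_complete {m : ℕ} (ho : o ∈ S) (hcard : S.card = m)
    (hconn : (G.induce (S : Set V)).Connected) :
    ∀ u ∈ S, u ∈ (run G d o (selE S) m).map Prod.fst := by
  have hbase : o ∈ (run G d o (selE S) m).map Prod.fst := by
    have hpos := run_length_pos G d o (selE S) m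
    have := run_getElem_zero G d o (selE S) m hpos
    have hmem : ((o : V), o) ∈ run G d o (selE S) m := by
      rw [← this]; exact List.getElem_mem hpos
    exact List.mem_map_of_mem (f := Prod.fst) hmem
  intro u hu
  have hreach := hconn.preconnected ⟨o, ho⟩ ⟨u, hu⟩
  refine hreach.elim (fun w => ?_)
  clear hreach
  have main : ∀ (a b : (S : Set V)) (w : (G.induce (S : Set V)).Walk a b),
      a.1 ∈ (run G d o (selE S) m).map Prod.fst →
      b.1 ∈ (run G d o (selE S) m).map Prod.fst := by
    intro a b w
    induction w with
    | nil => exact id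
    | @cons x y z hxy w ih =>
      intro hx
      apply ih
      obtain ⟨vp, hvp, hvpeq⟩ := List.mem_map.mp hx
      obtain ⟨i, hi, hieq⟩ := List.mem_iff_getElem.mp hvp
      have hadjG : G.Adj x.1 y.1 := hxy
      apply runE_closed G d o S ho hcard hi (u := y.1)
      · rw [hieq, hvpeq]; exact hadjG
      · exact y.2
  exact main _ _ w hbase

lemma runE_final {m : ℕ} (ho : o ∈ S) (hcard : S.card = m)
    (hconn : (G.induce (S : Set V)).Connected) :
    ((run G d o (selE S) m).map Prod.fst).toFinset = S ∧
      (run G d o (selE S) m).length = m := by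
  obtain ⟨hnodup, hin⟩ := runE_inv G d o S ho m
  have hFS : ((run G d o (selE S) m).map Prod.fst).toFinset = S := by
    apply Finset.Subset.antisymm
    · intro u hu
      rw [List.mem_toFinset] at hu
      obtain ⟨vp, hvp, rfl⟩ := List.mem_map.mp hu
      exact hin vp hvp
    · intro u hu
      rw [List.mem_toFinset]
      exact runE_complete G d o S ho hcard hconn u hu
  refine ⟨hFS, ?_⟩
  have h1 : ((run G d o (selE S) m).map Prod.fst).toFinset.card
      = (run G d o (selE S) m).length := by
    rw [List.toFinset_card_of_nodup hnodup, List.length_map]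
  rw [hFS, hcard] at h1
  omega

end ESel


section Code

variable (G : SimpleGraph V) [G.LocallyFinite] (d : ℕ) (o : V) (S : Finset V)

/-- the set of global slot indices used at step `i`. -/
noncomputable def codeAt (i : ℕ) : Finset ℕ :=
  match (run G d o (selE S) i)[i]? with
  | none => ∅
  | some vp => (((sl G i vp).enum.filter
      (fun ju => selE S (gIdx d i ju.1) ju.2 (run G d o (selE S) i))).map
      (fun ju => gIdx d i ju.1)).toFinset

lemma codeAt_none {i : ℕ} (h : (run G d o (selE S) i)[i]? = none) :
    codeAt G d o S i = ∅ := by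
  unfold codeAt; rw [h]

lemma codeAt_some {i : ℕ} {vp : V × V} (h : (run G d o (selE S) i)[i]? = some vp) :
    codeAt G d o S i = (((sl G i vp).enum.filter
      (fun ju => selE S (gIdx d i ju.1) ju.2 (run G d o (selE S) i))).map
      (fun ju => gIdx d i ju.1)).toFinset := by
  unfold codeAt; rw [h]

lemma mem_codeAt {g i : ℕ} (hg : g ∈ codeAt G d o S i) :
    ∃ vp j u, (run G d o (selE S) i)[i]? = some vp ∧ j < (sl G i vp).length ∧
      (j, u) ∈ (sl G i vp).enum.filter
        (fun ju => selE S (gIdx d i ju.1) ju.2 (run G d o (selE S) i)) ∧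
      g = gIdx d i j := by
  cases h : (run G d o (selE S) i)[i]? with
  | none => rw [codeAt_none G d o S h] at hg; simp at hg
  | some vp =>
    rw [codeAt_some G d o S h, List.mem_toFinset] at hg
    obtain ⟨ju, hju, hgeq⟩ := List.mem_map.mp hg
    obtain ⟨j, u⟩ := ju
    have henum : (j, u) ∈ (sl G i vp).enum := List.mem_of_mem_filter hju
    rw [List.mk_mem_enum_iff_getElem?] at henum
    have hj : j < (sl G i vp).length := by
      by_contra hcon
      rw [List.getElem?_eq_none (by omega)] at henum
      exact nomatch henum
    exact ⟨vp, j, u, rfl, hj, hju, hgeq.symm⟩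

lemma gIdx_right_inj {i j j' : ℕ} (h : gIdx d i j = gIdx d i j') : j = j' := by
  unfold gIdx at h
  rcases Nat.eq_zero_or_pos i with h0 | h0
  · simpa [h0] using h
  · have hne : i ≠ 0 := by omega
    simp only [hne, if_neg, if_false] at h
    omega

lemma codeAt_card (i : ℕ) :
    (codeAt G d o S i).card + (run G d o (selE S) i).length
      = (run G d o (selE S) (i+1)).length := by
  cases h : (run G d o (selE S) i)[i]? with
  | none =>
    rw [codeAt_none G d o S h, run_succ_eq, stepF_none G d (selE S) h]
    simp
  | some vp =>
    rw [codeAt_some G d o S h, run_succ_eq, stepF_some G d (selE S) h]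
    set filt := ((sl G i vp).enum.filter
      (fun ju => selE S (gIdx d i ju.1) ju.2 (run G d o (selE S) i))) with hfilt
    have hnodup : (filt.map (fun ju => gIdx d i ju.1)).Nodup := by
      have h1 : (filt.map Prod.fst).Nodup := by
        have hsub : List.Sublist (filt.map Prod.fst) ((sl G i vp).enum.map Prod.fst) :=
          (List.filter_sublist).map Prod.fst
        rw [List.enum_map_fst] at hsub
        exact hsub.nodup (List.nodup_range)
      have h2 : filt.map (fun ju => gIdx d i ju.1) = (filt.map Prod.fst).map (gIdx d i) := by
        rw [List.map_map]; rfl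
      rw [h2]
      exact h1.map (fun _ _ h => gIdx_right_inj d h)
    rw [List.toFinset_card_of_nodup hnodup, List.length_append, List.length_map,
      List.length_map]
    omega

lemma mem_codeAt_bound (hdeg : ∀ v : V, G.degree v ≤ d) {g i : ℕ}
    (hg : g ∈ codeAt G d o S i) : ∃ j < bd d i, g = gIdx d i j := by
  obtain ⟨vp, j, u, hsome, hj, _, hgeq⟩ := mem_codeAt G d o S hg
  exact ⟨j, lt_of_lt_of_le hj (sl_length_le G d o (selE S) hdeg hsome), hgeq⟩

/-- the full code of `S`. -/
noncomputable def code (m : ℕ) : Finset ℕ :=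
  (Finset.range m).biUnion (fun i => codeAt G d o S i)

lemma code_card_aux (hdeg : ∀ v : V, G.degree v ≤ d) (k : ℕ) :
    ((Finset.range k).biUnion (fun i => codeAt G d o S i)).card + 1
      = (run G d o (selE S) k).length := by
  induction k with
  | zero => simp [run_zero_eq]
  | succ n ih =>
    rw [Finset.range_add_one, Finset.biUnion_insert]
    have hdisj : Disjoint (codeAt G d o S n)
        ((Finset.range n).biUnion (fun i => codeAt G d o S i)) := by
      rw [Finset.disjoint_left]
      intro g hg1 hg2
      obtain ⟨i, hi, hg2'⟩ := Finset.mem_biUnion.mp hg2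
      rw [Finset.mem_range] at hi
      obtain ⟨j, hj, hje⟩ := mem_codeAt_bound G d o S hdeg hg1
      obtain ⟨j', hj', hje'⟩ := mem_codeAt_bound G d o S hdeg hg2'
      have := (gIdx_inj hj hj' (by rw [← hje, ← hje'])).1
      omega
    rw [Finset.card_union_of_disjoint hdisj]
    have := codeAt_card G d o S n
    omega

lemma code_subset (hd : 2 ≤ d) (hdeg : ∀ v : V, G.degree v ≤ d) {m : ℕ} (hm : 1 ≤ m) :
    code G d o S m ⊆ Finset.range ((d-1)*m + 1) := by
  intro g hg
  obtain ⟨i, hi, hg'⟩ := Finset.mem_biUnion.mp hg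
  rw [Finset.mem_range] at hi
  obtain ⟨j, hj, hje⟩ := mem_codeAt_bound G d o S hdeg hg'
  rw [Finset.mem_range, hje]
  exact gIdx_lt hd hm hi hj

lemma decode_agree (hdeg : ∀ v : V, G.degree v ≤ d) {m : ℕ} :
    ∀ i ≤ m, run G d o (selD (code G d o S m)) i = run G d o (selE S) i := by
  intro i him
  induction i with
  | zero => rfl
  | succ n ih =>
    have ihn := ih (by omega)
    rw [run_succ_eq, run_succ_eq, ihn]
    cases h : (run G d o (selE S) n)[n]? with
    | none => rw [stepF_none G d _ h, stepF_none G d _ h]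
    | some vp =>
      rw [stepF_some G d _ h, stepF_some G d _ h]
      congr 1
      congr 1
      apply List.filter_congr
      intro ju hju
      obtain ⟨j, u⟩ := ju
      rw [List.mk_mem_enum_iff_getElem?] at hju
      have hj : j < (sl G n vp).length := by
        by_contra hcon
        rw [List.getElem?_eq_none (by omega)] at hju
        exact nomatch hju
      show decide (gIdx d n j ∈ code G d o S m)
          = decide (u ∈ S ∧ u ∉ (run G d o (selE S) n).map Prod.fst)
      apply decide_eq_decide.mpr
      constructor
      · intro hmemcode
        obtain ⟨i', hi', hg'⟩ := Finset.mem_biUnion.mp hmemcode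
        rw [Finset.mem_range] at hi'
        obtain ⟨vp', j', u', hsome', hj', hfilt', hgeq'⟩ := mem_codeAt G d o S hg'
        have hb : j < bd d n := lt_of_lt_of_le hj (sl_length_le G d o (selE S) hdeg h)
        have hb' : j' < bd d i' := lt_of_lt_of_le hj' (sl_length_le G d o (selE S) hdeg hsome')
        obtain ⟨hii, hjj⟩ := gIdx_inj hb' hb hgeq'.symm
        subst hii
        subst hjj
        have hvpvp : vp' = vp := by
          rw [h] at hsome'
          exact (Option.some.inj hsome').symm
        subst hvpvp
        have hu'u : u' = u := by
          have := List.mem_of_mem_filter hfilt'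
          rw [List.mk_mem_enum_iff_getElem?] at this
          rw [hju] at this
          exact (Option.some.inj this).symm
        subst hu'u
        have hpred := (List.mem_filter.mp hfilt').2
        exact selE_eq_true_iff.mp hpred
      · intro hsel
        apply Finset.mem_biUnion.mpr
        refine ⟨n, Finset.mem_range.mpr (by omega), ?_⟩
        rw [codeAt_some G d o S h, List.mem_toFinset]
        apply List.mem_map.mpr
        refine ⟨(j, u), ?_, rfl⟩
        rw [List.mem_filter]
        refine ⟨?_, ?_⟩
        · rw [List.mk_mem_enum_iff_getElem?]; exact hju
        · exact selE_eq_true_iff.mpr hsel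

/-- the decoding map. -/
noncomputable def decode (m : ℕ) (T : Finset ℕ) : Finset V :=
  ((run G d o (selD T) m).map Prod.fst).toFinset

lemma decode_code {m : ℕ} (hdeg : ∀ v : V, G.degree v ≤ d) (ho : o ∈ S)
    (hcard : S.card = m) (hconn : (G.induce (S : Set V)).Connected) :
    decode G d o m (code G d o S m) = S := by
  unfold decode
  rw [decode_agree G d o S hdeg m le_rfl]
  exact (runE_final G d o S ho hcard hconn).1

lemma code_card {m : ℕ} (hdeg : ∀ v : V, G.degree v ≤ d) (ho : o ∈ S)
    (hcard : S.card = m) (hconn : (G.induce (S : Set V)).Connected) :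
    (code G d o S m).card = m - 1 := by
  have h1 := code_card_aux G d o S hdeg m
  have h2 := (runE_final G d o S ho hcard hconn).2
  unfold code
  omega

end Code

end KestenAux


variable {V : Type*}

/-- Kesten's bound on lattice animals: in a graph of maximum degree `d`, the number
of connected `m`-vertex subsets containing a fixed vertex `o` is at most `((d-1)e)^m`. -/
theorem lattice_animal_bound (G : SimpleGraph V) [G.LocallyFinite]
    (d : ℕ) (hd : 2 ≤ d) (hdeg : ∀ v : V, G.degree v ≤ d) (o : V) (m : ℕ) (hm : 1 ≤ m) :
    ({S : Finset V | o ∈ S ∧ (G.induce (S : Set V)).Connected ∧ S.card = m}.ncard : ℝ)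
      ≤ (((d : ℝ) - 1) * Real.exp 1) ^ m := by
  classical
  set N := (d-1)*m + 1 with hN
  set A : Set (Finset V) := {S : Finset V | o ∈ S ∧ (G.induce (S : Set V)).Connected ∧ S.card = m} with hA
  have hmap : ∀ S ∈ A, KestenAux.code G d o S m
      ∈ (↑(Finset.powersetCard (m-1) (Finset.range N)) : Set (Finset ℕ)) := by
    intro S hS
    obtain ⟨h1, h2, h3⟩ := hS
    rw [Finset.mem_coe, Finset.mem_powersetCard]
    exact ⟨KestenAux.code_subset G d o S hd hdeg hm,
      KestenAux.code_card G d o S hdeg h1 h3 h2⟩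
  have hinj : Set.InjOn (fun S => KestenAux.code G d o S m) A := by
    intro S1 hS1 S2 hS2 he
    obtain ⟨h1, h2, h3⟩ := hS1
    obtain ⟨h1', h2', h3'⟩ := hS2
    have d1 := KestenAux.decode_code G d o S1 hdeg h1 h3 h2
    have d2 := KestenAux.decode_code G d o S2 hdeg h1' h3' h2'
    simp only at he
    rw [← d1, ← d2, he]
  have hfin : (↑(Finset.powersetCard (m-1) (Finset.range N)) : Set (Finset ℕ)).Finite :=
    (Finset.powersetCard (m-1) (Finset.range N)).finite_toSet
  have h1 := Set.ncard_le_ncard_of_injOn _ hmap hinj hfin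
  rw [Set.ncard_coe_finset, Finset.card_powersetCard, Finset.card_range] at h1
  have h2 : (A.ncard : ℝ) ≤ (N.choose (m-1) : ℝ) := by exact_mod_cast h1
  have h3 := numeric_bound (d-1) m (by omega) hm
  have hcast : ((d-1:ℕ):ℝ) = (d:ℝ) - 1 := by
    rw [Nat.cast_sub (by omega : 1 ≤ d)]
    norm_num
  calc (A.ncard : ℝ) ≤ (N.choose (m-1) : ℝ) := h2
    _ ≤ (((d-1:ℕ):ℝ) * Real.exp 1)^m := h3
    _ = (((d:ℝ)-1) * Real.exp 1)^m := by rw [hcast]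
end

section
/- Let G be a d-regular graph, k ≥ 1, and S a finite set of vertices that is internally spanned by the k-neighbor bootstrap rule from an initial occupied set A ⊆ S of size x. If w denotes the number of edges of G with exactly one endpoint in S, then d·x + (|S| - x)(d - 2k) ≥ w. In particular, if w > h|S| with h + 2k - d > 0, then x > |S|·(h - d + 2k)/(2k). -/
variable {V : Type*}

/-- The bootstrap closure of `A` under the `k`-neighbor rule restricted to `S`
(vertices outside `S` stay permanently vacant). -/
def SimpleGraph.bootClosureIn (G : SimpleGraph V) (k : ℕ) (S A : Set V) : Set V :=
  ⋂₀ {B | A ⊆ B ∧ ∀ v ∈ S, k ≤ {w | G.Adj v w ∧ w ∈ B ∩ S}.ncard → v ∈ B}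

/-- `S` is internally spanned from `A ⊆ S` if the `k`-neighbor rule restricted to `S`,
started from `A`, eventually occupies all of `S`. -/
def SimpleGraph.InternallySpanned (G : SimpleGraph V) (k : ℕ) (S A : Set V) : Prop :=
  A ⊆ S ∧ S ⊆ G.bootClosureIn k S A

/-! Track the boundary `perimeter T = ∑ v ∈ T, #(N v \ T)` of the occupied set `T`. Initially
it is at most `d·|A|`. Occupying a vertex `v` with at least `k` occupied neighbours removes those
edges from the boundary and adds at most the remaining `deg v - k ≤ d - k`, so each step raises
the perimeter by at most `d - 2k`; after `|S| - |A|` steps the occupied set is `S`, whose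
perimeter is `w`. -/

open Finset

namespace SimpleGraph

variable {G : SimpleGraph V} {k : ℕ}

theorem bootClosureIn_subset {S A B : Set V} (hAB : A ⊆ B)
    (hB : ∀ v ∈ S, k ≤ {w | G.Adj v w ∧ w ∈ B ∩ S}.ncard → v ∈ B) :
    G.bootClosureIn k S A ⊆ B :=
  Set.sInter_subset_of_mem ⟨hAB, hB⟩

theorem bootClosureIn_mono {S A B : Set V} (hAB : A ⊆ B) :
    G.bootClosureIn k S A ⊆ G.bootClosureIn k S B :=
  Set.subset_sInter fun _ hC => Set.sInter_subset_of_mem ⟨hAB.trans hC.1, hC.2⟩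

theorem InternallySpanned.mono {S A B : Set V} (h : G.InternallySpanned k S A) (hAB : A ⊆ B)
    (hBS : B ⊆ S) : G.InternallySpanned k S B :=
  ⟨hBS, h.2.trans (bootClosureIn_mono hAB)⟩

variable [G.LocallyFinite] [DecidableEq V]

theorem InternallySpanned.exists_le_card_neighborFinset_inter {S A : Finset V}
    (h : G.InternallySpanned k S A) (hSA : ¬S ⊆ A) :
    ∃ v ∈ S \ A, k ≤ #(G.neighborFinset v ∩ A) := by
  by_contra! hlt
  refine hSA fun v hv => mem_coe.1 <| bootClosureIn_subset subset_rfl ?_ (h.2 hv)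
  intro u hu hk
  by_contra huA
  have hA : {w | G.Adj u w ∧ w ∈ (A : Set V) ∩ S} = ↑(G.neighborFinset u ∩ A) := by
    ext w
    simp only [Set.mem_ofPred_eq, Set.mem_inter_iff, coe_inter, mem_coe, mem_neighborFinset]
    exact ⟨fun hw => ⟨hw.1, hw.2.1⟩, fun hw => ⟨hw.1, hw.2, h.1 hw.2⟩⟩
  rw [hA, Set.ncard_coe_finset] at hk
  exact (hlt u (mem_sdiff.2 ⟨hu, huA⟩)).not_ge hk

variable (G) in
def perimeter (T : Finset V) : ℕ :=
  ∑ v ∈ T, #(G.neighborFinset v \ T)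

theorem perimeter_le {d : ℕ} (hdeg : ∀ v, G.degree v ≤ d) (T : Finset V) :
    G.perimeter T ≤ d * #T := by
  rw [mul_comm, ← smul_eq_mul, ← sum_const]
  exact sum_le_sum fun v _ => (card_le_card sdiff_subset).trans (hdeg v)

theorem perimeter_insert {T : Finset V} {v : V} (hv : v ∉ T) :
    G.perimeter (insert v T) + 2 * #(G.neighborFinset v ∩ T) = G.perimeter T + G.degree v := by
  have hterm : ∀ u ∈ T,
      #(G.neighborFinset u \ insert v T) + (if u ∈ G.neighborFinset v then 1 else 0)
        = #(G.neighborFinset u \ T) := by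
    intro u _
    rw [sdiff_insert]
    have hvu : v ∈ G.neighborFinset u ↔ u ∈ G.neighborFinset v := by
      simp only [mem_neighborFinset, G.adj_comm]
    split_ifs with huv
    · exact card_erase_add_one (mem_sdiff.2 ⟨hvu.2 huv, hv⟩)
    · rw [erase_eq_of_notMem fun h => huv (hvu.1 (mem_sdiff.1 h).1), add_zero]
  have hcount :
      ∑ u ∈ T, (if u ∈ G.neighborFinset v then 1 else 0) = #(G.neighborFinset v ∩ T) := by
    rw [← card_filter, filter_mem_eq_inter, inter_comm]
  have hv' : G.neighborFinset v \ insert v T = G.neighborFinset v \ T := by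
    rw [sdiff_insert, erase_eq_of_notMem fun h => G.notMem_neighborFinset_self v (mem_sdiff.1 h).1]
  rw [perimeter, perimeter, sum_insert hv, hv', ← card_neighborFinset_eq_degree,
    ← card_sdiff_add_card_inter (G.neighborFinset v) T, ← hcount, ← sum_congr rfl hterm,
    sum_add_distrib]
  ring

theorem perimeter_eq_sum_ncard (T : Finset V) :
    G.perimeter T = ∑ v ∈ T, {u | G.Adj v u ∧ u ∉ T}.ncard := by
  refine sum_congr rfl fun v _ => ?_
  rw [← Set.ncard_coe_finset]
  congr 1
  ext u
  simp

theorem InternallySpanned.perimeter_add_le {d : ℕ} (hdeg : ∀ v, G.degree v ≤ d)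
    {S A : Finset V} (h : G.InternallySpanned k S A) :
    G.perimeter S + 2 * k * #(S \ A) ≤ G.perimeter A + d * #(S \ A) := by
  induction hn : #(S \ A) generalizing A with
  | zero =>
    rw [card_eq_zero, sdiff_eq_empty_iff_subset] at hn
    rw [subset_antisymm hn (coe_subset.1 h.1)]
    simp
  | succ n ih =>
    obtain ⟨v, hvSA, hvk⟩ := h.exists_le_card_neighborFinset_inter fun hSA => by
      simp [sdiff_eq_empty_iff_subset.2 hSA] at hn
    obtain ⟨hvS, hvA⟩ := mem_sdiff.1 hvSA
    have hn' : #(S \ insert v A) = n := by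
      rw [sdiff_insert, card_erase_of_mem hvSA, hn, Nat.add_sub_cancel]
    have hspan' : G.InternallySpanned k S (insert v A : Finset V) := by
      simpa using h.mono (Set.subset_insert v _) (Set.insert_subset hvS h.1)
    have hstep := ih hspan' hn'
    have hins := perimeter_insert (G := G) hvA
    have hdv := hdeg v
    rw [mul_add, mul_add, mul_one, mul_one]
    linarith

end SimpleGraph

/-- Perimeter bound for internally spanned sets in a `d`-regular graph:
if `S` is internally spanned from an initial set `A` of size `x`, and `w` is the number
of boundary edges of `S`, then `d·x + (|S| - x)(d - 2k) ≥ w`; in particular if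
`w > h·|S|` with `h + 2k - d > 0` then `x > |S|·(h - d + 2k)/(2k)`. -/
theorem internally_spanned_perimeter_bound (G : SimpleGraph V) [G.LocallyFinite]
    (d k : ℕ) (hk : 1 ≤ k) (hreg : ∀ v : V, G.degree v = d)
    (S A : Finset V) (hspan : G.InternallySpanned k (S : Set V) (A : Set V)) :
    (d : ℝ) * A.card + ((S.card : ℝ) - A.card) * ((d : ℝ) - 2 * k)
        ≥ (∑ v ∈ S, {u | G.Adj v u ∧ u ∉ S}.ncard : ℕ) ∧
    ∀ h : ℝ, 0 < h + 2 * k - d →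
      h * S.card < (∑ v ∈ S, {u | G.Adj v u ∧ u ∉ S}.ncard : ℕ) →
      (S.card : ℝ) * (h - d + 2 * k) / (2 * k) < A.card := by
  classical
  have hdeg : ∀ v, G.degree v ≤ d := fun v => (hreg v).le
  have hspread := hspan.perimeter_add_le hdeg
  have hinit := G.perimeter_le hdeg A
  have hAS : A ⊆ S := coe_subset.1 hspan.1
  have hcard : (#(S \ A) : ℝ) = #S - #A := by
    rw [card_sdiff_of_subset hAS, Nat.cast_sub (card_le_card hAS)]
  rw [← G.perimeter_eq_sum_ncard]
  have hbound : (G.perimeter S : ℝ) ≤ d * #A + (#S - #A) * (d - 2 * k) := by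
    rw [← hcard]
    have : (G.perimeter S : ℝ) + 2 * k * #(S \ A) ≤ d * #A + d * #(S \ A) := by
      exact_mod_cast hspread.trans (by omega)
    linarith
  refine ⟨hbound, fun h _ hlarge => ?_⟩
  rw [div_lt_iff₀ (by positivity)]
  linarith
end

section
/- Define f(q) = 2 - q + 4q² - 3q³ on [0,1]. Then max_{q ∈ [0,1]} f(q) = f((4+√7)/9), and the infimum of p ∈ [0,1] such that the equation q = (1/2)(1-p)(2q - q² + 4q³ - 3q⁴) has no solution q ∈ (0,1] equals 1 - 2/f((4+√7)/9). -/
/-!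
Dividing the fixed-point equation by `q > 0` turns it into `(1 - p) f(q) = 2`. Since
`f(q*) - f(q) = 3 (q - q*)² (q - (4 - 2√7)/9)` for `q* = (4 + √7)/9`, the cubic `f` is maximised
on `[0, ∞)` at `q*`, with `f(q*) > 2 = f(1)`. Hence for `(1 - p) f(q*) < 2` there is no solution,
while for `(1 - p) f(q*) ≥ 2` the intermediate value theorem on `[q*, 1]` produces one: the set
of admissible `p` is exactly the interval `(1 - 2/f(q*), 1]`.
-/

open Set

theorem setOf_forall_one_sub_mul_ne_eq_Ioc {g : ℝ → ℝ} {c k : ℝ} (hc : c ∈ Ioc 0 1)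
    (hg : ContinuousOn g (Icc c 1)) (hmax : ∀ q ∈ Ioc 0 1, g q ≤ g c) (hk : 0 < k)
    (hkc : k ≤ g c) (hg1 : g 1 ≤ k) :
    {p : ℝ | p ∈ Icc 0 1 ∧ ∀ q ∈ Ioc 0 1, (1 - p) * g q ≠ k} = Ioc (1 - k / g c) 1 := by
  have hM : 0 < g c := hk.trans_le hkc
  ext p
  simp only [mem_ofPred_eq, mem_Icc, mem_Ioc, sub_lt_comm, lt_div_iff₀ hM]
  constructor
  · rintro ⟨⟨hp0, hp1⟩, hnone⟩
    refine ⟨?_, hp1⟩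
    by_contra! hle
    have hend : (1 - p) * g 1 ≤ k := by nlinarith
    obtain ⟨q, ⟨hcq, hq1⟩, hq⟩ :=
      intermediate_value_Icc' hc.2 (continuousOn_const.mul hg) ⟨hend, hle⟩
    exact hnone q ⟨hc.1.trans_le hcq, hq1⟩ hq
  · rintro ⟨hlt, hp1⟩
    have hp0 : 0 ≤ p := by nlinarith
    refine ⟨⟨hp0, hp1⟩, fun q hq => (lt_of_le_of_lt ?_ hlt).ne⟩
    exact mul_le_mul_of_nonneg_left (hmax q hq) (by linarith)

theorem sInf_setOf_forall_one_sub_mul_ne {g : ℝ → ℝ} {c k : ℝ} (hc : c ∈ Ioc 0 1)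
    (hg : ContinuousOn g (Icc c 1)) (hmax : ∀ q ∈ Ioc 0 1, g q ≤ g c) (hk : 0 < k)
    (hkc : k ≤ g c) (hg1 : g 1 ≤ k) :
    sInf {p : ℝ | p ∈ Icc 0 1 ∧ ∀ q ∈ Ioc 0 1, (1 - p) * g q ≠ k} = 1 - k / g c := by
  rw [setOf_forall_one_sub_mul_ne_eq_Ioc hc hg hmax hk hkc hg1]
  exact csInf_Ioc (sub_lt_self 1 (div_pos hk (hk.trans_le hkc)))

def fortPoly (q : ℝ) : ℝ := 2 - q + 4 * q ^ 2 - 3 * q ^ 3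

noncomputable def fortPolyArgmax : ℝ := (4 + √7) / 9

theorem fortPoly_argmax_sub_fortPoly (q : ℝ) :
    fortPoly fortPolyArgmax - fortPoly q
      = 3 * (q - fortPolyArgmax) ^ 2 * (q - (4 - 2 * √7) / 9) := by
  have h7 : √7 ^ 2 = 7 := Real.sq_sqrt (by norm_num)
  unfold fortPoly fortPolyArgmax
  linear_combination (q / 9 - (√7 + 4) / 81) * h7

theorem two_lt_sqrt_seven : 2 < √7 := by
  rw [Real.lt_sqrt (by norm_num)]; norm_num

theorem sqrt_seven_lt_three : √7 < 3 := by
  rw [Real.sqrt_lt' (by norm_num)]; norm_num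

theorem fortPoly_le_fortPoly_argmax {q : ℝ} (hq : 0 ≤ q) :
    fortPoly q ≤ fortPoly fortPolyArgmax := by
  have hroot : (4 - 2 * √7) / 9 ≤ q := by linarith [two_lt_sqrt_seven]
  have := fortPoly_argmax_sub_fortPoly q
  nlinarith [mul_nonneg (sq_nonneg (q - fortPolyArgmax)) (sub_nonneg.2 hroot)]

theorem fortPolyArgmax_mem_Ioc : fortPolyArgmax ∈ Ioc 0 1 := by
  unfold fortPolyArgmax
  constructor <;> linarith [two_lt_sqrt_seven, sqrt_seven_lt_three]

theorem fortPoly_one : fortPoly 1 = 2 := by norm_num [fortPoly]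

theorem two_lt_fortPoly_argmax : 2 < fortPoly fortPolyArgmax := by
  have h7 : √7 ^ 2 = 7 := Real.sq_sqrt (by norm_num)
  have hval : fortPoly fortPolyArgmax = (506 + 14 * √7) / 243 := by
    unfold fortPoly fortPolyArgmax
    linear_combination (-√7 / 243) * h7
  rw [hval]
  linarith [two_lt_sqrt_seven]

theorem eq_half_mul_iff_one_sub_mul_fortPoly_eq {p q : ℝ} (hq : q ≠ 0) :
    q = (1/2) * (1 - p) * (2*q - q^2 + 4*q^3 - 3*q^4) ↔ (1 - p) * fortPoly q = 2 := by
  unfold fortPoly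
  constructor
  · intro h
    have : q * ((1 - p) * (2 - q + 4*q^2 - 3*q^3) - 2) = 0 := by linear_combination -2 * h
    exact sub_eq_zero.1 ((mul_eq_zero.1 this).resolve_left hq)
  · intro h
    linear_combination (-q / 2) * h

/-- With `f q = 2 - q + 4q² - 3q³`, the maximum of `f` on `[0,1]` is attained at
`q = (4+√7)/9`, and the infimum of `p ∈ [0,1]` for which the fixed-point equation
`q = (1/2)(1-p)(2q - q² + 4q³ - 3q⁴)` has no solution `q ∈ (0,1]` equals
`1 - 2 / f((4+√7)/9)`. -/
theorem gw_tree_beats_regular_tree :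
    (∀ q ∈ Set.Icc (0:ℝ) 1,
        2 - q + 4*q^2 - 3*q^3
          ≤ 2 - (4+Real.sqrt 7)/9 + 4*((4+Real.sqrt 7)/9)^2 - 3*((4+Real.sqrt 7)/9)^3) ∧
    sInf {p : ℝ | p ∈ Set.Icc (0:ℝ) 1 ∧
        ∀ q ∈ Set.Ioc (0:ℝ) 1, q ≠ (1/2)*(1-p)*(2*q - q^2 + 4*q^3 - 3*q^4)}
      = 1 - 2 / (2 - (4+Real.sqrt 7)/9 + 4*((4+Real.sqrt 7)/9)^2 - 3*((4+Real.sqrt 7)/9)^3) := by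
  refine ⟨fun q hq => fortPoly_le_fortPoly_argmax hq.1, ?_⟩
  have hset : {p : ℝ | p ∈ Icc (0:ℝ) 1 ∧
        ∀ q ∈ Ioc (0:ℝ) 1, q ≠ (1/2)*(1-p)*(2*q - q^2 + 4*q^3 - 3*q^4)}
      = {p : ℝ | p ∈ Icc 0 1 ∧ ∀ q ∈ Ioc 0 1, (1 - p) * fortPoly q ≠ 2} := by
    ext p
    refine and_congr_right fun _ => forall₂_congr fun q hq => ?_
    rw [Ne, eq_half_mul_iff_one_sub_mul_fortPoly_eq hq.1.ne']
  rw [hset]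
  exact sInf_setOf_forall_one_sub_mul_ne fortPolyArgmax_mem_Ioc
    (by unfold fortPoly; fun_prop)
    (fun q hq => fortPoly_le_fortPoly_argmax hq.1.le) two_pos two_lt_fortPoly_argmax.le
    fortPoly_one.le
end
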